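/- arXiv:2106.11121 — 6 statements merged into one kernel-verified Lean document; each statement's English description precedes it below -/
import Mathlib

section
/- Let G be a simple graph on n vertices with chromatic number χ(G), and let A be its adjacency matrix with eigenvalues λ₁ ≥ λ₂ ≥ ⋯ ≥ λₙ. If n ≥ m ≥ χ(G) ≥ 2, then λ₁ + λₙ + λₙ₋₁ + ⋯ + λₙ₋ₘ₊₂ ≤ 0. -/
/-- The `i`-th largest eigenvalue (0-indexed) of a real symmetric matrix; `0` if out of
range or not symmetric. -/
noncomputable def eigDesc {n : ℕ} (A : Matrix (Fin n) (Fin n) ℝ) : ℕ → ℝ :=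
  fun i => if h : i < n ∧ A.IsHermitian then
    h.2.eigenvalues (Tuple.sort (fun j => -h.2.eigenvalues j) ⟨i, h.1⟩) else 0

/-!
Take a proper colouring using all `m` colours and a unit eigenvector `x` for `λ₁`. Normalising
`x` on each colour class (or choosing any unit vector on a class where `x` vanishes) gives an
`n × m` matrix `U` with orthonormal columns, each supported on an independent set, with `x` in its
column space. Then `B = Uᵀ A U` has zero diagonal, so its eigenvalues `μ` sum to `0`, and
`λ₁ = xᵀ A x ≤ μ_max`. The other `m - 1` eigenvectors of `B`, pushed forward by `U`, form an
orthonormal `(m - 1)`-frame on which the trace of `A` is `-μ_max`; by Ky Fan's principle this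
trace bounds `λₙ + ⋯ + λₙ₋ₘ₊₂` from above.
-/

open Matrix Finset

lemma Finset.sum_le_sum_mul_of_sum_eq_card {ι : Type*} [Fintype ι] (lam s : ι → ℝ)
    (K : Finset ι) (hs0 : ∀ i, 0 ≤ s i) (hs1 : ∀ i, s i ≤ 1) (hs : ∑ i, s i = #K)
    (hK : ∀ i ∈ K, ∀ j ∉ K, lam i ≤ lam j) :
    ∑ i ∈ K, lam i ≤ ∑ i, lam i * s i := by
  classical
  obtain ⟨t, hlt, hgt⟩ : ∃ t, (∀ i ∈ K, lam i ≤ t) ∧ ∀ j ∉ K, t ≤ lam j := by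
    rcases K.eq_empty_or_nonempty with rfl | hne
    · obtain ⟨t, ht⟩ := (Set.finite_range lam).bddBelow
      exact ⟨t, by simp, fun j _ => ht ⟨j, rfl⟩⟩
    · exact ⟨K.sup' hne lam, fun i hi => K.le_sup' lam hi,
        fun j hj => sup'_le hne lam fun i hi => hK i hi j hj⟩
  -- with `t` separating `lam` on `K` from `lam` off `K`, every term below is nonnegative
  have hterm : ∀ i, 0 ≤ (lam i - t) * (s i - if i ∈ K then 1 else 0) := by
    intro i
    split_ifs with hi
    · exact mul_nonneg_of_nonpos_of_nonpos (by linarith [hlt i hi]) (by linarith [hs1 i])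
    · exact mul_nonneg (by linarith [hgt i hi]) (by linarith [hs0 i])
  have hsum : ∑ i, (lam i - t) * (s i - if i ∈ K then 1 else 0) =
      ∑ i, lam i * s i - ∑ i ∈ K, lam i := by
    simp only [mul_sub, sub_mul, sum_sub_distrib, ← mul_sum, hs, mul_ite, mul_one, mul_zero,
      sum_ite_mem, univ_inter, sum_const, nsmul_eq_mul]
    ring
  linarith [sum_nonneg fun i (_ : i ∈ univ) => hterm i]

namespace Matrix

lemma mulVec_dotProduct_eq_dotProduct_conjTranspose_mulVec {m n : Type*} [Fintype m] [Fintype n]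
    (M : Matrix m n ℝ) (v : n → ℝ) (w : m → ℝ) : (M *ᵥ v) ⬝ᵥ w = v ⬝ᵥ Mᴴ *ᵥ w := by
  rw [conjTranspose_eq_transpose_of_trivial, mulVec_transpose, dotProduct_comm v,
    ← dotProduct_mulVec, dotProduct_comm]

lemma dotProduct_diagonal_mulVec_self {n : Type*} [Fintype n] [DecidableEq n] (d v : n → ℝ) :
    v ⬝ᵥ diagonal d *ᵥ v = ∑ i, d i * v i ^ 2 := by
  simp only [dotProduct, mulVec_diagonal]
  exact sum_congr rfl fun i _ => by ring

lemma trace_mul_diagonal {n : Type*} [Fintype n] [DecidableEq n] (M : Matrix n n ℝ) (d : n → ℝ) :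
    (M * diagonal d).trace = ∑ i, d i * M i i := by
  simp [trace, mul_diagonal, mul_comm]

lemma diag_mem_Icc_of_isHermitian_of_mul_self {n : Type*} [Fintype n] {Q : Matrix n n ℝ}
    (hQ : Q.IsHermitian) (hQQ : Q * Q = Q) (i : n) : Q i i ∈ Set.Icc 0 1 := by
  have hsq : Q i i = ∑ j, Q i j ^ 2 := by
    conv_lhs => rw [← hQQ]
    refine sum_congr rfl fun j _ => ?_
    show Q i j * Q j i = Q i j ^ 2
    rw [sq, ← hQ.apply j i, star_trivial]
  have hle : Q i i ^ 2 ≤ Q i i := hsq ▸ single_le_sum (f := fun j => Q i j ^ 2)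
    (fun j _ => sq_nonneg _) (mem_univ i)
  have h0 : 0 ≤ Q i i := hsq ▸ sum_nonneg fun j _ => sq_nonneg _
  exact ⟨h0, by nlinarith⟩

namespace IsHermitian

variable {n : Type*} [Fintype n] [DecidableEq n] {A : Matrix n n ℝ} (hA : A.IsHermitian)

lemma conjTranspose_eigenvectorUnitary_mul_mul :
    (hA.eigenvectorUnitary : Matrix n n ℝ)ᴴ * A * hA.eigenvectorUnitary =
      diagonal hA.eigenvalues := by
  simpa [Unitary.conjStarAlgAut_star_apply, star_eq_conjTranspose] using
    hA.conjStarAlgAut_star_eigenvectorUnitary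

lemma eigenvectorUnitary_mul_conjTranspose :
    (hA.eigenvectorUnitary : Matrix n n ℝ) * (hA.eigenvectorUnitary : Matrix n n ℝ)ᴴ = 1 := by
  rw [← star_eq_conjTranspose]
  exact Unitary.coe_mul_star_self _

lemma dotProduct_mulVec_eq_sum (x : n → ℝ) :
    x ⬝ᵥ A *ᵥ x =
      ∑ i, hA.eigenvalues i * ((hA.eigenvectorUnitary : Matrix n n ℝ)ᴴ *ᵥ x) i ^ 2 := by
  set P : Matrix n n ℝ := ↑hA.eigenvectorUnitary
  have hx : x = P *ᵥ (Pᴴ *ᵥ x) := by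
    rw [mulVec_mulVec, hA.eigenvectorUnitary_mul_conjTranspose, one_mulVec]
  calc x ⬝ᵥ A *ᵥ x = (P *ᵥ (Pᴴ *ᵥ x)) ⬝ᵥ A *ᵥ (P *ᵥ (Pᴴ *ᵥ x)) := by rw [← hx]
    _ = (Pᴴ *ᵥ x) ⬝ᵥ (Pᴴ * A * P) *ᵥ (Pᴴ *ᵥ x) := by
      rw [mulVec_dotProduct_eq_dotProduct_conjTranspose_mulVec, mulVec_mulVec, mulVec_mulVec,
        Matrix.mul_assoc]
    _ = _ := by
      rw [hA.conjTranspose_eigenvectorUnitary_mul_mul, dotProduct_diagonal_mulVec_self]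

lemma dotProduct_mulVec_le {x : n → ℝ} (hx : x ⬝ᵥ x = 1) {t : ℝ}
    (ht : ∀ i, hA.eigenvalues i ≤ t) : x ⬝ᵥ A *ᵥ x ≤ t := by
  set P : Matrix n n ℝ := ↑hA.eigenvectorUnitary
  have hnorm : ∑ i, (Pᴴ *ᵥ x) i ^ 2 = 1 := by
    have h : (Pᴴ *ᵥ x) ⬝ᵥ (Pᴴ *ᵥ x) = x ⬝ᵥ x := by
      rw [mulVec_dotProduct_eq_dotProduct_conjTranspose_mulVec, conjTranspose_conjTranspose,
        mulVec_mulVec, hA.eigenvectorUnitary_mul_conjTranspose, one_mulVec]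
    rw [← h.trans hx]
    simp only [dotProduct, sq]
  calc x ⬝ᵥ A *ᵥ x = ∑ i, hA.eigenvalues i * (Pᴴ *ᵥ x) i ^ 2 := hA.dotProduct_mulVec_eq_sum x
    _ ≤ ∑ i, t * (Pᴴ *ᵥ x) i ^ 2 :=
        sum_le_sum fun i _ => mul_le_mul_of_nonneg_right (ht i) (sq_nonneg _)
    _ = t := by rw [← mul_sum, hnorm, mul_one]

lemma sum_eigenvalues_le_trace {k : Type*} [Fintype k] [DecidableEq k] {V : Matrix n k ℝ}
    (hV : Vᴴ * V = 1) {K : Finset n} (hK : #K = Fintype.card k)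
    (hKlow : ∀ i ∈ K, ∀ j ∉ K, hA.eigenvalues i ≤ hA.eigenvalues j) :
    ∑ i ∈ K, hA.eigenvalues i ≤ (Vᴴ * A * V).trace := by
  set P : Matrix n n ℝ := ↑hA.eigenvectorUnitary
  set M := Pᴴ * V
  have hPP : P * Pᴴ = 1 := hA.eigenvectorUnitary_mul_conjTranspose
  have hM : Mᴴ * M = 1 := by
    rw [conjTranspose_mul, conjTranspose_conjTranspose, Matrix.mul_assoc, ← Matrix.mul_assoc P,
      hPP, Matrix.one_mul, hV]
  have htr : (Vᴴ * A * V).trace = ∑ i, hA.eigenvalues i * (M * Mᴴ) i i := by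
    have hV' : V = P * M := by rw [← Matrix.mul_assoc, hPP, Matrix.one_mul]
    rw [hV', conjTranspose_mul,
      show Mᴴ * Pᴴ * A * (P * M) = Mᴴ * (Pᴴ * A * P) * M by simp only [Matrix.mul_assoc],
      hA.conjTranspose_eigenvectorUnitary_mul_mul, trace_mul_comm, ← Matrix.mul_assoc,
      trace_mul_diagonal]
  have hQ : (M * Mᴴ).IsHermitian := isHermitian_mul_conjTranspose_self M
  have hQQ : M * Mᴴ * (M * Mᴴ) = M * Mᴴ := by
    rw [Matrix.mul_assoc, ← Matrix.mul_assoc Mᴴ, hM, Matrix.one_mul]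
  have hs : ∑ i, (M * Mᴴ) i i = Fintype.card k := by
    change (M * Mᴴ).trace = _
    rw [trace_mul_comm, hM, trace_one]
  -- `M Mᴴ` is an orthogonal projection of rank `card k`: its diagonal is a system of weights
  rw [htr]
  exact sum_le_sum_mul_of_sum_eq_card _ _ K
    (fun i => (diag_mem_Icc_of_isHermitian_of_mul_self hQ hQQ i).1)
    (fun i => (diag_mem_Icc_of_isHermitian_of_mul_self hQ hQQ i).2) (by rw [hs, hK]) hKlow

lemma exists_trace_eq_sum_eigenvalues_comp {κ : Type*} [Fintype κ] [DecidableEq κ]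
    {f : κ → n} (hf : Function.Injective f) :
    ∃ W : Matrix n κ ℝ, Wᴴ * W = 1 ∧ (Wᴴ * A * W).trace = ∑ a, hA.eigenvalues (f a) := by
  set P : Matrix n n ℝ := ↑hA.eigenvectorUnitary
  have hsub : ∀ M : Matrix n n ℝ, (P.submatrix id f)ᴴ * M * P.submatrix id f =
      (Pᴴ * M * P).submatrix f f := fun M => by
    rw [submatrix_mul _ _ _ id _ Function.bijective_id,
      submatrix_mul _ _ _ id _ Function.bijective_id, conjTranspose_submatrix, submatrix_id_id]
  refine ⟨P.submatrix id f, ?_, ?_⟩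
  · rw [← Matrix.mul_one (P.submatrix id f)ᴴ, hsub, Matrix.mul_one, ← star_eq_conjTranspose,
      Unitary.coe_star_mul_self, submatrix_one _ hf]
  · rw [hsub, hA.conjTranspose_eigenvectorUnitary_mul_mul, submatrix_diagonal _ _ hf,
      trace_diagonal]
    rfl

end IsHermitian

end Matrix

lemma exists_unit_vector_supported_of_nonempty {ι : Type*} [Fintype ι] [DecidableEq ι]
    (x : ι → ℝ) {s : Finset ι} (hs : s.Nonempty) :
    ∃ e : ι → ℝ, (∀ i ∉ s, e i = 0) ∧ e ⬝ᵥ e = 1 ∧ ∃ r : ℝ, ∀ i ∈ s, x i = r * e i := by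
  set z : ι → ℝ := fun i => if i ∈ s then x i else 0
  have hz : ∀ i ∈ s, x i = z i := fun i hi => by simp [z, hi]
  by_cases hzz : z ⬝ᵥ z = 0
  · obtain ⟨i₀, hi₀⟩ := hs
    have hz0 : z = 0 := dotProduct_self_eq_zero.mp hzz
    refine ⟨Pi.single i₀ 1, fun i hi => Pi.single_eq_of_ne (by rintro rfl; exact hi hi₀) _,
      by simp, 0, fun i hi => by simp [hz i hi, hz0]⟩
  · have hzpos : 0 ≤ z ⬝ᵥ z := by simpa using dotProduct_self_star_nonneg z
    set r := √(z ⬝ᵥ z)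
    have hr : r ≠ 0 := Real.sqrt_ne_zero'.mpr (hzpos.lt_of_ne' hzz)
    refine ⟨r⁻¹ • z, fun i hi => by simp [z, hi], ?_, r, fun i hi => ?_⟩
    · rw [smul_dotProduct, dotProduct_smul, smul_smul, smul_eq_mul, ← sq, inv_pow,
        Real.sq_sqrt hzpos, inv_mul_cancel₀ hzz]
    · rw [Pi.smul_apply, smul_eq_mul, ← mul_assoc, mul_inv_cancel₀ hr, one_mul, hz i hi]

lemma exists_fiberwise_orthonormal_mulVec_eq {V κ : Type*} [Fintype V] [DecidableEq V]
    [Fintype κ] [DecidableEq κ] {c : V → κ} (hc : Function.Surjective c) (x : V → ℝ) :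
    ∃ U : Matrix V κ ℝ, Uᴴ * U = 1 ∧ (∀ v j, c v ≠ j → U v j = 0) ∧ ∃ y, U *ᵥ y = x := by
  choose e he0 he1 r hr using fun j => exists_unit_vector_supported_of_nonempty x
    (s := univ.filter (c · = j)) ⟨(hc j).choose, by simp [(hc j).choose_spec]⟩
  have he : ∀ j v, c v ≠ j → e j v = 0 := fun j v h => he0 j v (by simpa using h)
  refine ⟨of fun v j => e j v, ?_, fun v j => he j v, r, ?_⟩
  · ext j l
    rw [mul_apply, one_apply]
    split_ifs with hjl
    · subst hjl
      simpa [dotProduct] using he1 j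
    · refine sum_eq_zero fun v _ => ?_
      by_cases hv : c v = j
      · simp [he l v (hv ▸ hjl)]
      · simp [he j v hv]
  · funext v
    rw [mulVec, dotProduct, sum_eq_single (c v) (fun j _ hj => by simp [he j v (Ne.symm hj)])
      (by simp)]
    simp [hr (c v) v (by simp), mul_comm]

namespace SimpleGraph

variable {V : Type*} [Fintype V] {G : SimpleGraph V}

lemma Colorable.exists_surjective_coloring {m : ℕ} (h : G.Colorable m)
    (hm : m ≤ Fintype.card V) : ∃ C : G.Coloring (Fin m), Function.Surjective C := by
  classical
  obtain ⟨C, -, hC⟩ := univ.exists_max_image (fun C : G.Coloring (Fin m) => #(univ.image C))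
    ⟨h.some, mem_univ _⟩
  refine ⟨C, fun j => ?_⟩
  by_contra! hj
  have hjC : j ∉ univ.image C := by simpa using hj
  have hlt : #(univ.image C) < #(univ : Finset V) :=
    calc #(univ.image C) < #(univ : Finset (Fin m)) :=
          card_lt_card (ssubset_univ_iff.mpr fun h => hjC (h ▸ mem_univ j))
      _ ≤ #(univ : Finset V) := by simpa using hm
  obtain ⟨v, -, w, -, hvw, hCvw⟩ :=
    exists_ne_map_eq_of_card_lt_of_maps_to hlt fun a _ => mem_image_of_mem C (mem_univ a)
  -- recolouring `v` with the unused colour `j` keeps `C` proper and uses one more colour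
  let C' : G.Coloring (Fin m) := Coloring.mk (Function.update C v j) fun {a b} hab => by
    simp only [Function.update_apply]
    split_ifs with ha hb hb
    · exact absurd (ha.trans hb.symm) hab.ne
    · exact (hj b).symm
    · exact hj a
    · exact C.valid hab
  have hC' : ∀ a, C' a = Function.update C v j a := fun _ => rfl
  have hsub : insert j (univ.image C) ⊆ univ.image C' := by
    intro u hu
    rcases mem_insert.mp hu with rfl | hu
    · exact mem_image.mpr ⟨v, mem_univ v, by simp [hC']⟩
    · obtain ⟨a, -, rfl⟩ := mem_image.mp hu
      by_cases hav : a = v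
      · refine mem_image.mpr ⟨w, mem_univ w, ?_⟩
        rw [hC', Function.update_of_ne hvw.symm, ← hCvw, hav]
      · exact mem_image.mpr ⟨a, mem_univ a, by simp [hC', hav]⟩
  have := (card_le_card hsub).trans (hC C' (mem_univ _))
  rw [card_insert_of_notMem hjC] at this
  omega

lemma Coloring.conjTranspose_mul_adjMatrix_mul_apply_self [DecidableRel G.Adj] {κ : Type*}
    [Fintype κ] (C : G.Coloring κ) {U : Matrix V κ ℝ} (hU : ∀ v j, C v ≠ j → U v j = 0) (j : κ) :
    (Uᴴ * G.adjMatrix ℝ * U) j j = 0 := by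
  simp only [mul_apply, conjTranspose_apply, star_trivial, adjMatrix_apply]
  refine sum_eq_zero fun w _ => ?_
  by_cases hw : C w = j
  · refine mul_eq_zero_of_left (sum_eq_zero fun v _ => ?_) _
    by_cases hv : C v = j
    · have hvw : ¬G.Adj v w := fun h => C.valid h (hv.trans hw.symm)
      simp [hvw]
    · simp [hU v j hv]
  · simp [hU w j hw]

theorem Coloring.dotProduct_adjMatrix_mulVec_add_le_zero [DecidableEq V] [DecidableRel G.Adj]
    {k : ℕ} (C : G.Coloring (Fin (k + 1))) (hC : Function.Surjective C) {x : V → ℝ}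
    (hx : x ⬝ᵥ x = 1) {S : ℝ}
    (hS : ∀ W : Matrix V (Fin k) ℝ, Wᴴ * W = 1 → S ≤ (Wᴴ * G.adjMatrix ℝ * W).trace) :
    x ⬝ᵥ G.adjMatrix ℝ *ᵥ x + S ≤ 0 := by
  set A := G.adjMatrix ℝ
  obtain ⟨U, hU, hUC, y, rfl⟩ := exists_fiberwise_orthonormal_mulVec_eq hC x
  set B := Uᴴ * A * U
  have hB : B.IsHermitian := isHermitian_conjTranspose_mul_mul U (G.isHermitian_adjMatrix ℝ)
  have htr : ∑ j, hB.eigenvalues j = 0 := by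
    have h0 : B.trace = 0 :=
      sum_eq_zero fun j _ => C.conjTranspose_mul_adjMatrix_mul_apply_self hUC j
    simpa [h0] using hB.trace_eq_sum_eigenvalues.symm
  obtain ⟨j₀, -, hj₀⟩ := univ.exists_max_image hB.eigenvalues univ_nonempty
  have hy : y ⬝ᵥ y = 1 := by
    rwa [mulVec_dotProduct_eq_dotProduct_conjTranspose_mulVec, mulVec_mulVec, hU, one_mulVec]
      at hx
  have hmax : U *ᵥ y ⬝ᵥ A *ᵥ U *ᵥ y ≤ hB.eigenvalues j₀ := by
    rw [mulVec_dotProduct_eq_dotProduct_conjTranspose_mulVec, mulVec_mulVec, mulVec_mulVec]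
    exact hB.dotProduct_mulVec_le hy fun j => hj₀ j (mem_univ j)
  have hrest : S ≤ -hB.eigenvalues j₀ := by
    obtain ⟨W, hW, htrW⟩ :=
      hB.exists_trace_eq_sum_eigenvalues_comp (Fin.succAbove_right_injective (p := j₀))
    have hUW : (U * W)ᴴ * (U * W) = 1 := by
      rw [conjTranspose_mul, Matrix.mul_assoc, ← Matrix.mul_assoc Uᴴ, hU, Matrix.one_mul, hW]
    have hBW : (U * W)ᴴ * A * (U * W) = Wᴴ * B * W := by
      simp only [B, conjTranspose_mul, Matrix.mul_assoc]
    have := hS (U * W) hUW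
    rw [hBW, htrW] at this
    rw [Fin.sum_univ_succAbove _ j₀] at htr
    linarith
  linarith

end SimpleGraph

section eigDesc

variable {n : ℕ} {A : Matrix (Fin n) (Fin n) ℝ}

lemma eigDesc_eq_eigenvalues_sort (hA : A.IsHermitian) (i : Fin n) :
    eigDesc A i = hA.eigenvalues (Tuple.sort (fun j => -hA.eigenvalues j) i) := by
  rw [eigDesc, dif_pos ⟨i.isLt, hA⟩]

lemma antitone_eigenvalues_comp_sort (hA : A.IsHermitian) :
    Antitone (hA.eigenvalues ∘ Tuple.sort (fun j => -hA.eigenvalues j)) :=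
  fun _ _ h => by simpa using Tuple.monotone_sort (fun j => -hA.eigenvalues j) h

lemma exists_dotProduct_mulVec_eq_eigDesc_zero (hA : A.IsHermitian) (hn : 0 < n) :
    ∃ x : Fin n → ℝ, x ⬝ᵥ x = 1 ∧ x ⬝ᵥ A *ᵥ x = eigDesc A 0 := by
  set i := Tuple.sort (fun j => -hA.eigenvalues j) ⟨0, hn⟩
  refine ⟨hA.eigenvectorBasis i, ?_, ?_⟩
  · have h := real_inner_self_eq_norm_sq (hA.eigenvectorBasis i)
    rw [hA.eigenvectorBasis.orthonormal.1 i, one_pow,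
      EuclideanSpace.inner_eq_star_dotProduct] at h
    simpa using h
  · rw [show (0 : ℕ) = ((⟨0, hn⟩ : Fin n) : ℕ) from rfl, eigDesc_eq_eigenvalues_sort hA,
      hA.eigenvalues_eq]
    simp [i]

lemma sum_eigDesc_le_trace (hA : A.IsHermitian) {k : ℕ} (hk : k ≤ n)
    {V : Matrix (Fin n) (Fin k) ℝ} (hV : Vᴴ * V = 1) :
    ∑ i ∈ range k, eigDesc A (n - 1 - i) ≤ (Vᴴ * A * V).trace := by
  set σ := Tuple.sort (fun j => -hA.eigenvalues j)
  set f : Fin k → Fin n := fun a => σ (Fin.castLE hk a).rev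
  have hf : Function.Injective f :=
    σ.injective.comp (Fin.rev_injective.comp (Fin.castLE_injective hk))
  have hsum : ∑ i ∈ range k, eigDesc A (n - 1 - i) = ∑ i ∈ univ.image f, hA.eigenvalues i := by
    rw [Finset.sum_range, sum_image hf.injOn]
    refine sum_congr rfl fun a _ => ?_
    rw [← eigDesc_eq_eigenvalues_sort hA, Fin.val_rev, Fin.val_castLE]
    congr 1
    omega
  rw [hsum]
  refine hA.sum_eigenvalues_le_trace hV (by rw [card_image_of_injective _ hf, card_univ]) ?_
  simp only [mem_image, mem_univ, true_and, not_exists, forall_exists_index,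
    forall_apply_eq_imp_iff]
  intro a j hj
  obtain ⟨b, rfl⟩ := σ.surjective j
  have hb : b ≤ (Fin.castLE hk a).rev := by
    by_contra! h
    rw [← Fin.rev_rev b, Fin.rev_lt_rev] at h
    have hba : (b.rev : ℕ) < k := by
      have := Fin.lt_def.mp h
      simp only [Fin.val_castLE] at this
      omega
    exact hj ⟨b.rev, hba⟩ (by simp only [f, Fin.castLE_mk, Fin.eta, Fin.rev_rev])
  exact antitone_eigenvalues_comp_sort hA hb

end eigDesc

theorem stmt0_general {n : ℕ} (G : SimpleGraph (Fin n)) [DecidableRel G.Adj]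
    (m : ℕ) (hm : 2 ≤ m) (hmn : m ≤ n)
    (hχm : G.chromaticNumber ≤ (m : ℕ∞)) :
    eigDesc (G.adjMatrix ℝ) 0 +
      ∑ i ∈ Finset.range (m - 1), eigDesc (G.adjMatrix ℝ) (n - 1 - i) ≤ 0 := by
  obtain ⟨k, rfl⟩ : ∃ k, m = k + 1 := ⟨m - 1, by omega⟩
  have hA := G.isHermitian_adjMatrix ℝ
  obtain ⟨C, hC⟩ :=
    (SimpleGraph.chromaticNumber_le_iff_colorable.mp hχm).exists_surjective_coloring
      (by simpa using hmn)
  obtain ⟨x, hx, hxA⟩ := exists_dotProduct_mulVec_eq_eigDesc_zero hA (by omega)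
  rw [← hxA]
  exact C.dotProduct_adjMatrix_mulVec_add_le_zero hC hx fun W hW =>
    sum_eigDesc_le_trace hA (by omega) hW

/-- Hoffman's sum-of-eigenvalues bound: if `n ≥ m ≥ χ(G) ≥ 2` then
`λ₁ + λₙ + λₙ₋₁ + ⋯ + λₙ₋ₘ₊₂ ≤ 0` for the adjacency matrix of `G`. -/
theorem stmt0 {n : ℕ} (G : SimpleGraph (Fin n)) [DecidableRel G.Adj]
    (m : ℕ) (hm : 2 ≤ m) (hmn : m ≤ n)
    (hχ2 : 2 ≤ G.chromaticNumber) (hχm : G.chromaticNumber ≤ (m : ℕ∞)) :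
    eigDesc (G.adjMatrix ℝ) 0 +
      ∑ i ∈ Finset.range (m - 1), eigDesc (G.adjMatrix ℝ) (n - 1 - i) ≤ 0 :=
  stmt0_general G m hm hmn hχm
end

section
/- Let Z be a real symmetric n×n matrix whose off-diagonal entries vanish on non-edges of a graph G (Zᵢⱼ = 0 whenever i ≠ j and ij ∉ E(G), and the diagonal of Z is zero). If c : V(G) → {1,…,m} is a proper coloring of G with m ≥ 2, then λ₁(Z) + λₙ(Z) + λₙ₋₁(Z) + ⋯ + λₙ₋ₘ₊₂(Z) ≤ 0, where λᵢ(Z) is the i-th largest eigenvalue of Z. -/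
/-!
Let `x` be a unit eigenvector of `Z` for `λ₁` and let `K` be the span of the restrictions of `x`
to the colour classes. These restrictions are pairwise orthogonal and `Z` has zero quadratic form
on each of them (a colour class is independent and the diagonal of `Z` vanishes), so the
compression of `Z` to `K` has trace `0`. Completing `x` to an orthonormal basis of `K`, the other
`dim K - 1 ≤ m - 1` basis vectors contribute at least the sum of the `dim K - 1` smallest
eigenvalues (Ky Fan), hence `λ₁ + λₙ + ⋯ + λₙ₋ₖ₊₁ ≤ 0` for `k = dim K - 1`. The same sum is
`tr Z = 0` for `k = n - 1`, and its increments in `k` are nondecreasing, so it is `≤ 0` for every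
`k` in between, in particular for `k = m - 1`.
-/

open Finset Module
open scoped InnerProductSpace

theorem Finset.sum_range_le_max_of_monotone {M : Type*} [AddCommGroup M] [LinearOrder M]
    [IsOrderedAddMonoid M] {d : ℕ → M} (hd : Monotone d) {a b c : ℕ} (hac : a ≤ c) (hcb : c ≤ b) :
    ∑ i ∈ range c, d i ≤ max (∑ i ∈ range a, d i) (∑ i ∈ range b, d i) := by
  rcases le_or_gt 0 (d c) with h | h
  · refine le_max_of_le_right ?_
    rw [← sum_range_add_sum_Ico _ hcb]
    exact le_add_of_nonneg_right (sum_nonneg fun i hi => h.trans (hd (mem_Ico.1 hi).1))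
  · refine le_max_of_le_left ?_
    rw [← sum_range_add_sum_Ico _ hac]
    exact add_le_of_nonpos_right (sum_nonpos fun i hi => (hd (mem_Ico.1 hi).2.le).trans h.le)

theorem sum_le_sum_mul_of_threshold {ι : Type*} [Fintype ι] (s : Finset ι) (ν u : ι → ℝ) (t : ℝ)
    (hs : ∀ j ∈ s, ν j ≤ t) (hsc : ∀ j ∉ s, t ≤ ν j) (hu0 : ∀ j, 0 ≤ u j) (hu1 : ∀ j, u j ≤ 1)
    (hu : ∑ j, u j = #s) : ∑ j ∈ s, ν j ≤ ∑ j, ν j * u j := by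
  classical
  have hterm : ∀ j, 0 ≤ (ν j - t) * (u j - if j ∈ s then 1 else 0) := by
    intro j
    by_cases hj : j ∈ s
    · simp only [hj, if_true]
      exact mul_nonneg_of_nonpos_of_nonpos (by linarith [hs j hj]) (by linarith [hu1 j])
    · simp only [hj, if_false, sub_zero]
      exact mul_nonneg (by linarith [hsc j hj]) (hu0 j)
  have hsum : ∑ j, (ν j - t) * (u j - if j ∈ s then 1 else 0)
      = ∑ j, ν j * u j - ∑ j ∈ s, ν j := by
    simp only [sub_mul, mul_sub, sum_sub_distrib, mul_ite, mul_one, mul_zero,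
      sum_ite_mem, univ_inter, ← mul_sum, hu, sum_const, nsmul_eq_mul]
    ring
  linarith [sum_nonneg fun j (_ : j ∈ univ) => hterm j]

theorem Fin.sum_filter_sub_le_val {M : Type*} [AddCommMonoid M] (g : ℕ → M) {n k : ℕ}
    (hk : k ≤ n) : ∑ j : Fin n with n - k ≤ j.val, g j = ∑ i ∈ range k, g (n - 1 - i) := by
  rcases Nat.eq_zero_or_pos n with rfl | hn
  · simp [Nat.le_zero.1 hk]
  have hIco :
      (univ.filter fun j : Fin n => n - k ≤ j.val).map Fin.valEmbedding = Ico (n - k) n := by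
    ext j
    simp only [mem_map, mem_filter, mem_univ, true_and, Fin.valEmbedding_apply, mem_Ico]
    exact ⟨fun ⟨j', hj', h⟩ => h ▸ ⟨hj', j'.is_lt⟩, fun ⟨h1, h2⟩ => ⟨⟨j, h2⟩, h1, rfl⟩⟩
  refine (sum_map _ Fin.valEmbedding g).symm.trans ?_
  rw [hIco, range_eq_Ico, sum_Ico_reflect _ _ (by omega)]
  congr 2 <;> omega

namespace Submodule

variable {𝕜 E : Type*} [RCLike 𝕜] [NormedAddCommGroup E] [InnerProductSpace 𝕜 E]

noncomputable def compression (K : Submodule 𝕜 E) [K.HasOrthogonalProjection] (T : E →ₗ[𝕜] E) :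
    K →ₗ[𝕜] K :=
  (K.orthogonalProjectionOnto : E →ₗ[𝕜] K) ∘ₗ T ∘ₗ K.subtype

theorem trace_compression_eq_sum_inner {ι : Type*} [Fintype ι] (K : Submodule 𝕜 E)
    [K.HasOrthogonalProjection] (T : E →ₗ[𝕜] E) (b : OrthonormalBasis ι 𝕜 K) :
    LinearMap.trace 𝕜 K (K.compression T) = ∑ i, ⟪(b i : E), T (b i)⟫_𝕜 := by
  simp [LinearMap.trace_eq_sum_inner _ b, compression]

end Submodule

namespace LinearMap.IsSymmetric

variable {E : Type*} [NormedAddCommGroup E] [InnerProductSpace ℝ E] [FiniteDimensional ℝ E]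
  {T : E →ₗ[ℝ] E} {n : ℕ}

theorem inner_map_self_eq_sum_eigenvalues (hT : T.IsSymmetric) (hn : finrank ℝ E = n) (v : E) :
    ⟪v, T v⟫_ℝ = ∑ j, hT.eigenvalues hn j * ⟪hT.eigenvectorBasis hn j, v⟫_ℝ ^ 2 := by
  rw [← (hT.eigenvectorBasis hn).sum_inner_mul_inner v (T v)]
  refine sum_congr rfl fun j _ => ?_
  rw [← hT, apply_eigenvectorBasis, real_inner_smul_left, real_inner_comm v]
  simp only [RCLike.ofReal_real_eq_id, id_eq]
  ring

theorem sum_eigenvalues_le_sum_inner (hT : T.IsSymmetric) (hn : finrank ℝ E = n)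
    {ι : Type*} [Fintype ι] {w : ι → E} (hw : Orthonormal ℝ w) :
    ∑ j : Fin n with n - Fintype.card ι ≤ j.val, hT.eigenvalues hn j
      ≤ ∑ i, ⟪w i, T (w i)⟫_ℝ := by
  set e := hT.eigenvectorBasis hn
  have hk : Fintype.card ι ≤ n := hn ▸ hw.linearIndependent.fintype_card_le_finrank
  rcases Nat.eq_zero_or_pos (Fintype.card ι) with hk0 | hkpos
  · rw [Fintype.card_eq_zero_iff] at hk0
    simp [fun j : Fin n => not_le.2 j.is_lt]
  set u : Fin n → ℝ := fun j => ∑ i, ⟪e j, w i⟫_ℝ ^ 2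
  have hu1 : ∀ j, u j ≤ 1 := by
    intro j
    have := hw.sum_inner_products_le (e j) (s := univ)
    simp only [e.orthonormal.1 j, one_pow, Real.norm_eq_abs, sq_abs] at this
    simpa only [u, real_inner_comm] using this
  have hu : ∑ j, u j = Fintype.card ι := by
    have hnorm : ∀ i, ∑ j, ⟪e j, w i⟫_ℝ ^ 2 = 1 := fun i => by
      simpa [sq, real_inner_comm (w i), hw.1 i] using e.sum_inner_mul_inner (w i) (w i)
    rw [sum_comm]
    simp [hnorm]
  have hs : #{j : Fin n | n - Fintype.card ι ≤ j.val} = Fintype.card ι := by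
    have := card_filter_add_card_filter_not (s := univ)
      (fun j : Fin n => j.val < n - Fintype.card ι)
    simp only [Fin.card_filter_val_lt, not_lt, card_univ, Fintype.card_fin] at this
    omega
  calc ∑ j : Fin n with n - Fintype.card ι ≤ j.val, hT.eigenvalues hn j
      ≤ ∑ j, hT.eigenvalues hn j * u j :=
        sum_le_sum_mul_of_threshold _ _ u (hT.eigenvalues hn ⟨n - Fintype.card ι, by omega⟩)
          (fun j hj => hT.eigenvalues_antitone hn (by simpa [Fin.le_def] using hj))
          (fun j hj => hT.eigenvalues_antitone hn (by simp [Fin.le_def] at hj ⊢; omega))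
          (fun j => sum_nonneg fun i _ => sq_nonneg _) hu1 (by rw [hu, hs])
    _ = ∑ i, ⟪w i, T (w i)⟫_ℝ := by
        simp only [inner_map_self_eq_sum_eigenvalues hT hn, u, mul_sum]
        exact sum_comm

theorem inner_add_sum_eigenvalues_le_trace_compression (hT : T.IsSymmetric)
    (hn : finrank ℝ E = n) (K : Submodule ℝ E) {x : E} (hxK : x ∈ K) (hx : ‖x‖ = 1) :
    ⟪x, T x⟫_ℝ + ∑ j : Fin n with n - (finrank ℝ K - 1) ≤ j.val, hT.eigenvalues hn j
      ≤ LinearMap.trace ℝ K (K.compression T) := by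
  obtain ⟨k, hk⟩ : ∃ k, finrank ℝ K = k + 1 := by
    refine Nat.exists_eq_succ_of_ne_zero fun h => ?_
    have hx0 : x ≠ 0 := norm_ne_zero_iff.1 (by rw [hx]; exact one_ne_zero)
    exact hx0 (by simpa [Submodule.finrank_eq_zero.1 h] using hxK)
  obtain ⟨b, hb⟩ := Orthonormal.exists_orthonormalBasis_extension_of_card_eq
    (ι := Fin (k + 1)) (by simpa using hk) (v := fun _ => (⟨x, hxK⟩ : K)) (s := {0})
    (orthonormal_subsingleton_iff.2 fun _ => by simpa using hx)
  have hw : Orthonormal ℝ fun i : Fin k => (b i.succ : E) :=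
    (b.orthonormal.comp_linearIsometry K.subtypeₗᵢ).comp _ (Fin.succ_injective _)
  rw [K.trace_compression_eq_sum_inner T b, Fin.sum_univ_succ, hb 0 rfl, hk]
  simpa using hT.sum_eigenvalues_le_sum_inner hn hw

-- `Matrix.IsHermitian.eigenvalues` is indexed through `Fin (Fintype.card (Fin n))`.
theorem eigenvalues_cast (hT : T.IsSymmetric) {n' : ℕ} (hn : finrank ℝ E = n)
    (hn' : finrank ℝ E = n') (i : Fin n) :
    hT.eigenvalues hn' (Fin.cast (hn.symm.trans hn') i) = hT.eigenvalues hn i := by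
  subst hn hn'
  rfl

end LinearMap.IsSymmetric

namespace Matrix

variable {ι α : Type*} [Fintype ι] [DecidableEq ι]

theorem inner_toEuclideanLin_self_eq_zero (Z : Matrix ι ι ℝ) (v : EuclideanSpace ℝ ι)
    (hZ : ∀ i j, v i ≠ 0 → v j ≠ 0 → Z i j = 0) : ⟪v, toEuclideanLin Z v⟫_ℝ = 0 := by
  simp only [toLpLin_apply, PiLp.inner_apply, mulVec, dotProduct,
    RCLike.inner_apply, conj_trivial, sum_mul]
  refine sum_eq_zero fun i _ => sum_eq_zero fun j _ => ?_
  by_cases hi : v i = 0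
  · simp [hi]
  by_cases hj : v j = 0
  · simp [hj]
  simp [hZ i j hi hj]

theorem exists_trace_compression_eq_zero [Fintype α] (Z : Matrix ι ι ℝ) (c : ι → α)
    (hZ : ∀ i j, c i = c j → Z i j = 0) (x : EuclideanSpace ℝ ι) :
    ∃ K : Submodule ℝ (EuclideanSpace ℝ ι), x ∈ K ∧ finrank ℝ K ≤ Fintype.card α ∧
      LinearMap.trace ℝ K (K.compression (toEuclideanLin Z)) = 0 := by
  classical
  set y : α → EuclideanSpace ℝ ι := fun s => WithLp.toLp 2 fun i => if c i = s then x i else 0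
  have hy : ∀ s i, y s i = if c i = s then x i else 0 := fun _ _ => rfl
  have horth : ∀ s t, s ≠ t → ⟪y s, y t⟫_ℝ = 0 := by
    intro s t hst
    simp only [PiLp.inner_apply, hy]
    refine sum_eq_zero fun i _ => ?_
    by_cases hs : c i = s
    · simp [hs, hst]
    · simp [hs]
  set a : {s // y s ≠ 0} → EuclideanSpace ℝ ι := fun s => ‖y s‖⁻¹ • y s
  have ha : Orthonormal ℝ a := by
    refine ⟨fun s => norm_smul_inv_norm s.2, fun s t hst => ?_⟩
    simp [a, real_inner_smul_left, real_inner_smul_right, horth s t (Subtype.coe_ne_coe.2 hst)]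
  set K := Submodule.span ℝ (univ.image a : Set (EuclideanSpace ℝ ι))
  have hyK : ∀ s, y s ∈ K := by
    intro s
    by_cases hs : y s = 0
    · simp [hs]
    · have : y s = ‖y s‖ • a ⟨s, hs⟩ := by simp [a, smul_smul, norm_ne_zero_iff.2 hs]
      rw [this]
      exact K.smul_mem _ (Submodule.subset_span (by simp))
  refine ⟨K, ?_, ?_, ?_⟩
  · have hsum : ∑ s, y s = x := by ext i; simp [hy]
    exact hsum ▸ K.sum_mem fun s _ => hyK s
  · calc finrank ℝ K ≤ #(univ.image a) := finrank_span_finset_le_card _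
      _ ≤ Fintype.card {s // y s ≠ 0} := card_image_le
      _ ≤ Fintype.card α := Fintype.card_subtype_le _
  · rw [K.trace_compression_eq_sum_inner _ (OrthonormalBasis.span ha univ)]
    refine sum_eq_zero fun s _ => ?_
    rw [OrthonormalBasis.span_apply]
    have hsupp : ∀ i, a s i ≠ 0 → c i = s := fun i h => by
      by_contra hc
      simp [a, hy, hc] at h
    exact inner_toEuclideanLin_self_eq_zero Z _ fun i j hi hj =>
      hZ i j ((hsupp i hi).trans (hsupp j hj).symm)

end Matrix

-- Both sides list the eigenvalues of `A` in decreasing order, and such a listing is unique.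
theorem eigDesc_eq_eigenvalues {n : ℕ} {A : Matrix (Fin n) (Fin n) ℝ} (hA : A.IsHermitian)
    {i : ℕ} (hi : i < n) :
    eigDesc A i = (Matrix.isSymmetric_toEuclideanLin_iff.mpr hA).eigenvalues
      finrank_euclideanSpace_fin ⟨i, hi⟩ := by
  set hT := Matrix.isSymmetric_toEuclideanLin_iff.mpr hA
  let τ : Equiv.Perm (Fin n) :=
    (finCongr (Fintype.card_fin n)).symm.trans (Fintype.equivOfCardEq (Fintype.card_fin _))
  have hτ : ∀ j, hA.eigenvalues (τ j) = hT.eigenvalues finrank_euclideanSpace_fin j := by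
    intro j
    simp only [τ, Matrix.IsHermitian.eigenvalues, Matrix.IsHermitian.eigenvalues₀,
      Equiv.trans_apply, Equiv.symm_apply_apply]
    exact hT.eigenvalues_cast _ _ j
  have hsort := Tuple.unique_monotone (f := fun j => -hA.eigenvalues j)
    (Tuple.monotone_sort _) (τ := τ) fun j k hjk => by
      simpa [hτ] using hT.eigenvalues_antitone finrank_euclideanSpace_fin hjk
  have := congrFun hsort ⟨i, hi⟩
  simp only [Function.comp_apply, neg_inj, hτ] at this
  unfold eigDesc
  rw [dif_pos ⟨hi, hA⟩]
  exact this

theorem eigDesc_le_eigDesc {n : ℕ} {A : Matrix (Fin n) (Fin n) ℝ} (hA : A.IsHermitian) {i j : ℕ}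
    (hij : i ≤ j) (hj : j < n) : eigDesc A j ≤ eigDesc A i := by
  rw [eigDesc_eq_eigenvalues hA hj, eigDesc_eq_eigenvalues hA (hij.trans_lt hj)]
  exact LinearMap.IsSymmetric.eigenvalues_antitone _ _ hij

theorem sum_eigenvalues_filter_eq_sum_eigDesc {n k : ℕ} {A : Matrix (Fin n) (Fin n) ℝ}
    (hA : A.IsHermitian) (hk : k ≤ n) :
    ∑ j : Fin n with n - k ≤ j.val, (Matrix.isSymmetric_toEuclideanLin_iff.mpr hA).eigenvalues
      finrank_euclideanSpace_fin j = ∑ i ∈ range k, eigDesc A (n - 1 - i) := by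
  rw [← Fin.sum_filter_sub_le_val _ hk]
  exact sum_congr rfl fun j _ => (eigDesc_eq_eigenvalues hA j.is_lt).symm

theorem eigDesc_zero_add_sum_le_trace_compression {n : ℕ} {A : Matrix (Fin n) (Fin n) ℝ}
    (hA : A.IsHermitian) (hn : 0 < n) (K : Submodule ℝ (EuclideanSpace ℝ (Fin n)))
    (hK : (Matrix.isSymmetric_toEuclideanLin_iff.mpr hA).eigenvectorBasis
      finrank_euclideanSpace_fin ⟨0, hn⟩ ∈ K) :
    eigDesc A 0 + ∑ i ∈ range (finrank ℝ K - 1), eigDesc A (n - 1 - i)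
      ≤ LinearMap.trace ℝ K (K.compression (Matrix.toEuclideanLin A)) := by
  set hT := Matrix.isSymmetric_toEuclideanLin_iff.mpr hA
  set e := hT.eigenvectorBasis finrank_euclideanSpace_fin
  have he : ⟪e ⟨0, hn⟩, Matrix.toEuclideanLin A (e ⟨0, hn⟩)⟫_ℝ = eigDesc A 0 := by
    rw [eigDesc_eq_eigenvalues hA hn, hT.apply_eigenvectorBasis, real_inner_smul_right,
      real_inner_self_eq_norm_sq, e.orthonormal.1]
    simp
  have hKn : finrank ℝ K ≤ n := K.finrank_le.trans_eq finrank_euclideanSpace_fin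
  rw [← he, ← sum_eigenvalues_filter_eq_sum_eigDesc hA (by omega)]
  exact hT.inner_add_sum_eigenvalues_le_trace_compression _ K hK (e.orthonormal.1 _)

theorem eigDesc_zero_add_sum_eq_trace {n : ℕ} {A : Matrix (Fin n) (Fin n) ℝ}
    (hA : A.IsHermitian) (hn : 0 < n) :
    eigDesc A 0 + ∑ i ∈ range (n - 1), eigDesc A (n - 1 - i) = A.trace := by
  set hT := Matrix.isSymmetric_toEuclideanLin_iff.mpr hA
  have htr : LinearMap.trace ℝ _ (Matrix.toEuclideanLin A) = A.trace :=
    Matrix.trace_toLin_eq A (PiLp.basisFun 2 ℝ (Fin n))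
  have hall := sum_eigenvalues_filter_eq_sum_eigDesc hA le_rfl
  simp only [Nat.sub_self, zero_le, filter_true] at hall
  rw [← htr, hT.trace_eq_sum_eigenvalues finrank_euclideanSpace_fin, hall]
  obtain ⟨k, rfl⟩ := Nat.exists_eq_add_one.2 hn
  simp [sum_range_succ, add_comm]

/-- Hoffman-type bound for any symmetric matrix supported on the edges of `G`:
if `G` has a proper `m`-colouring with `m ≥ 2`, then
`λ₁(Z) + λₙ(Z) + ⋯ + λₙ₋ₘ₊₂(Z) ≤ 0`. -/
theorem stmt1 {n : ℕ} (G : SimpleGraph (Fin n)) (m : ℕ) (hm : 2 ≤ m) (hmn : m ≤ n)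
    (Z : Matrix (Fin n) (Fin n) ℝ) (hZsymm : Z.IsSymm)
    (hZsupp : ∀ i j, ¬ G.Adj i j → Z i j = 0)
    (c : Fin n → Fin m) (hc : ∀ i j, G.Adj i j → c i ≠ c j) :
    eigDesc Z 0 + ∑ i ∈ Finset.range (m - 1), eigDesc Z (n - 1 - i) ≤ 0 := by
  have hA : Z.IsHermitian := hZsymm
  have hn : 0 < n := by omega
  obtain ⟨K, hxK, hKm, htr⟩ := Matrix.exists_trace_compression_eq_zero Z c
    (fun i j h => hZsupp i j fun hadj => hc i j hadj h) _
  have hK := eigDesc_zero_add_sum_le_trace_compression hA hn K hxK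
  have htop := eigDesc_zero_add_sum_eq_trace hA hn
  have htrZ : Z.trace = 0 := by simp [Matrix.trace, fun i => hZsupp i i (G.irrefl)]
  have hmono : Monotone fun i => eigDesc Z (n - 1 - i) := fun i j hij =>
    eigDesc_le_eigDesc hA (by omega) (by omega)
  rw [Fintype.card_fin] at hKm
  calc eigDesc Z 0 + ∑ i ∈ range (m - 1), eigDesc Z (n - 1 - i)
      ≤ eigDesc Z 0 + max (∑ i ∈ range (finrank ℝ K - 1), eigDesc Z (n - 1 - i))
          (∑ i ∈ range (n - 1), eigDesc Z (n - 1 - i)) := by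
        gcongr
        exact sum_range_le_max_of_monotone hmono (by omega) (by omega)
    _ ≤ 0 := by
        rw [← max_add_add_left]
        exact max_le (htr ▸ hK) (htop.trans htrZ).le
end

section
/- For any real symmetric n×n matrix M and any integer 1 ≤ k ≤ n, the sum of the k largest eigenvalues of M equals the maximum of ⟨M, X⟩ = tr(MX) over all real symmetric matrices X with tr X = k and 0 ⪯ X ⪯ I. -/
open Matrix Finset

theorem Finset.sum_mul_le_sum_of_threshold {ι : Type*} [Fintype ι] {s : Finset ι} {g z : ι → ℝ}
    {t : ℝ} (hs : ∀ i ∈ s, t ≤ g i) (hsc : ∀ i ∉ s, g i ≤ t) (hz0 : ∀ i, 0 ≤ z i)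
    (hz1 : ∀ i, z i ≤ 1) (hz : ∑ i, z i = #s) : ∑ i, g i * z i ≤ ∑ i ∈ s, g i := by
  classical
  have hterm : ∀ i, (g i - t) * (z i - if i ∈ s then 1 else 0) ≤ 0 := by
    intro i
    by_cases hi : i ∈ s
    · rw [if_pos hi]
      exact mul_nonpos_of_nonneg_of_nonpos (by linarith [hs i hi]) (by linarith [hz1 i])
    · rw [if_neg hi, sub_zero]
      exact mul_nonpos_of_nonpos_of_nonneg (by linarith [hsc i hi]) (hz0 i)
  have hexpand : ∑ i, (g i - t) * (z i - if i ∈ s then 1 else 0)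
      = ∑ i, g i * z i - ∑ i ∈ s, g i - t * (∑ i, z i - #s) := by
    simp only [mul_sub, sub_mul, mul_ite, mul_one, mul_zero, sum_sub_distrib, sum_ite_mem,
      univ_inter, sum_const, nsmul_eq_mul, mul_sum]
    ring
  have hsum := sum_nonpos fun i (_ : i ∈ univ) => hterm i
  rw [hexpand, hz, sub_self, mul_zero] at hsum
  linarith

theorem Finset.sum_range_eq_sum_fin_filter {M : Type*} [AddCommMonoid M] {k n : ℕ} (hkn : k ≤ n)
    (f : ℕ → M) : ∑ i ∈ range k, f i = ∑ i ∈ univ.filter (fun i : Fin n => (i : ℕ) < k), f i := by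
  rw [Finset.sum_filter, Fin.sum_univ_eq_sum_range (fun i => if i < k then f i else 0),
    ← Finset.sum_filter]
  congr 1
  ext i
  simp only [mem_range, mem_filter]
  omega

namespace Matrix.IsHermitian

variable {ι : Type*} [Fintype ι] [DecidableEq ι] {M : Matrix ι ι ℝ} (hM : M.IsHermitian)

theorem trace_mul_eq_sum_eigenvalues_mul (X : Matrix ι ι ℝ) :
    (M * X).trace = ∑ i, hM.eigenvalues i *
      (star (hM.eigenvectorUnitary : Matrix ι ι ℝ) * X * hM.eigenvectorUnitary) i i := by
  set U : Matrix ι ι ℝ := ↑hM.eigenvectorUnitary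
  have hspec : M = U * diagonal hM.eigenvalues * star U := by simpa using hM.spectral_theorem
  calc (M * X).trace = (U * (diagonal hM.eigenvalues * (star U * X))).trace := by
        conv_lhs => rw [hspec]
        simp only [mul_assoc]
    _ = (diagonal hM.eigenvalues * (star U * X * U)).trace := by
        rw [trace_mul_comm, mul_assoc]
    _ = _ := by simp [Matrix.trace, diagonal_mul]

theorem trace_mul_le_sum_eigenvalues {s : Finset ι} {t : ℝ}
    (hs : ∀ i ∈ s, t ≤ hM.eigenvalues i) (hsc : ∀ i ∉ s, hM.eigenvalues i ≤ t)
    {X : Matrix ι ι ℝ} (hX : X.PosSemidef) (hIX : (1 - X).PosSemidef) (htr : X.trace = #s) :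
    (M * X).trace ≤ ∑ i ∈ s, hM.eigenvalues i := by
  set U : Matrix ι ι ℝ := ↑hM.eigenvectorUnitary
  have hU : star U * U = 1 := Unitary.star_mul_self_of_mem hM.eigenvectorUnitary.2
  have hU' : U * star U = 1 := Unitary.mul_star_self_of_mem hM.eigenvectorUnitary.2
  have hY : (star U * X * U).PosSemidef := by
    simpa [star_eq_conjTranspose] using hX.conjTranspose_mul_mul_same U
  have hIY : (1 - star U * X * U).PosSemidef := by
    rw [show 1 - star U * X * U = star U * (1 - X) * U by rw [mul_sub, sub_mul, mul_one, hU]]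
    simpa [star_eq_conjTranspose] using hIX.conjTranspose_mul_mul_same U
  rw [hM.trace_mul_eq_sum_eigenvalues_mul X]
  refine sum_mul_le_sum_of_threshold hs hsc (fun i => hY.diag_nonneg) (fun i => ?_) ?_
  · simpa using hIY.diag_nonneg (i := i)
  · change (star U * X * U).trace = _
    rw [trace_mul_comm, ← mul_assoc, hU', one_mul, htr]

theorem exists_trace_mul_eq_sum_eigenvalues (s : Finset ι) :
    ∃ X : Matrix ι ι ℝ, X.PosSemidef ∧ (1 - X).PosSemidef ∧ X.trace = #s ∧
      (M * X).trace = ∑ i ∈ s, hM.eigenvalues i := by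
  set U : Matrix ι ι ℝ := ↑hM.eigenvectorUnitary with hUdef
  have hU : star U * U = 1 := Unitary.star_mul_self_of_mem hM.eigenvectorUnitary.2
  have hU' : U * star U = 1 := Unitary.mul_star_self_of_mem hM.eigenvectorUnitary.2
  set p : ι → ℝ := fun i => if i ∈ s then 1 else 0
  have hconj {d : ι → ℝ} (hd : ∀ i, 0 ≤ d i) : (U * diagonal d * star U).PosSemidef := by
    simpa [star_eq_conjTranspose] using
      (posSemidef_diagonal_iff.mpr hd).mul_mul_conjTranspose_same U
  refine ⟨U * diagonal p * star U, hconj fun i => ?_, ?_, ?_, ?_⟩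
  · simp only [p]; split_ifs <;> norm_num
  · have hcompl : 1 - U * diagonal p * star U = U * diagonal (fun i => 1 - p i) * star U := by
      have : diagonal (fun i => 1 - p i) = 1 - diagonal p := by
        rw [← diagonal_one, diagonal_sub]
      rw [this, mul_sub, sub_mul, mul_one, hU']
    rw [hcompl]
    exact hconj fun i => by simp only [p]; split_ifs <;> norm_num
  · rw [trace_mul_cycle, hU, one_mul, trace_diagonal]
    simp [p]
  · rw [hM.trace_mul_eq_sum_eigenvalues_mul]
    have hdiag : star U * (U * diagonal p * star U) * U = diagonal p := by
      simp only [← mul_assoc, hU, one_mul]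
      rw [mul_assoc, hU, mul_one]
    rw [← hUdef, hdiag]
    simp [p]

section SortedEigenvalues

variable {n : ℕ} {M : Matrix (Fin n) (Fin n) ℝ} (hM : M.IsHermitian)

noncomputable def sortPerm : Equiv.Perm (Fin n) := Tuple.sort fun j => -hM.eigenvalues j

theorem eigDesc_eq (i : Fin n) : eigDesc M i = hM.eigenvalues (hM.sortPerm i) := by
  rw [eigDesc, dif_pos ⟨i.isLt, hM⟩]
  rfl

theorem antitone_eigenvalues_sortPerm : Antitone (hM.eigenvalues ∘ hM.sortPerm) :=
  fun _ _ hij => neg_le_neg_iff.mp (Tuple.monotone_sort (fun j => -hM.eigenvalues j) hij)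

noncomputable def topEigenIndices (k : ℕ) : Finset (Fin n) :=
  (univ.filter fun i : Fin n => (i : ℕ) < k).map hM.sortPerm.toEmbedding

theorem card_topEigenIndices {k : ℕ} (hkn : k ≤ n) : #(hM.topEigenIndices k) = k := by
  simp [topEigenIndices, Fin.card_filter_val_lt, hkn]

theorem sum_eigenvalues_topEigenIndices {k : ℕ} (hkn : k ≤ n) :
    ∑ i ∈ hM.topEigenIndices k, hM.eigenvalues i = ∑ i ∈ range k, eigDesc M i := by
  rw [topEigenIndices, sum_map, sum_range_eq_sum_fin_filter hkn]
  exact sum_congr rfl fun i _ => (hM.eigDesc_eq i).symm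

theorem exists_threshold_topEigenIndices {k : ℕ} (hk : 1 ≤ k) (hkn : k ≤ n) :
    ∃ t, (∀ i ∈ hM.topEigenIndices k, t ≤ hM.eigenvalues i) ∧
      ∀ i ∉ hM.topEigenIndices k, hM.eigenvalues i ≤ t := by
  refine ⟨hM.eigenvalues (hM.sortPerm ⟨k - 1, by omega⟩), fun i hi => ?_, fun i hi => ?_⟩
  · obtain ⟨j, hj, rfl⟩ := mem_map.mp hi
    exact hM.antitone_eigenvalues_sortPerm
      (Fin.le_def.mpr (Nat.le_sub_one_of_lt (mem_filter.mp hj).2))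
  · have hlast : ¬ ((hM.sortPerm.symm i : ℕ) < k) := fun h =>
      hi (mem_map.mpr ⟨_, by simpa using h, by simp⟩)
    have hle : (⟨k - 1, by omega⟩ : Fin n) ≤ hM.sortPerm.symm i :=
      Fin.le_def.mpr (show k - 1 ≤ _ by omega)
    simpa using hM.antitone_eigenvalues_sortPerm hle

end SortedEigenvalues

end Matrix.IsHermitian

/-- Ky Fan's theorem: the sum of the `k` largest eigenvalues of a symmetric matrix `M`
is the maximum of `⟨M, X⟩ = tr (M X)` over symmetric `X` with `tr X = k` and
`0 ⪯ X ⪯ I`. -/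
theorem stmt2 {n : ℕ} (M : Matrix (Fin n) (Fin n) ℝ) (hM : M.IsSymm)
    (k : ℕ) (hk : 1 ≤ k) (hkn : k ≤ n) :
    IsGreatest {r : ℝ | ∃ X : Matrix (Fin n) (Fin n) ℝ, X.IsSymm ∧
        X.trace = (k : ℝ) ∧ X.PosSemidef ∧ (1 - X).PosSemidef ∧ r = (M * X).trace}
      (∑ i ∈ Finset.range k, eigDesc M i) := by
  have hMh : M.IsHermitian := isHermitian_iff_isSymm.mpr hM
  have hcard : (#(hMh.topEigenIndices k) : ℝ) = k := by rw [hMh.card_topEigenIndices hkn]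
  obtain ⟨t, htop, hrest⟩ := hMh.exists_threshold_topEigenIndices hk hkn
  rw [← hMh.sum_eigenvalues_topEigenIndices hkn]
  constructor
  · obtain ⟨X, hX, hIX, htr, hMX⟩ :=
      hMh.exists_trace_mul_eq_sum_eigenvalues (hMh.topEigenIndices k)
    exact ⟨X, isHermitian_iff_isSymm.mp hX.isHermitian, htr.trans hcard, hX, hIX, hMX.symm⟩
  · rintro r ⟨X, -, htr, hX, hIX, rfl⟩
    exact hMh.trace_mul_le_sum_eigenvalues htop hrest hX hIX (htr.trans hcard.symm)
end

section
/- Let G be a graph with fractional chromatic number χ_f(G), let w ∈ ℝ₊^V, let N be the vertex-coclique incidence matrix of G, and let y ≥ 0 satisfy Ny = 𝟙 and 𝟙ᵀy = χ_f(G). Define M = Σ_{S independent, w(S)≠0} y(S) · Diag(χ_S) √w √wᵀ Diag(χ_S) / w(S), where χ_S is the characteristic vector of independent set S and w(S) = wᵀχ_S. Then tr M = χ_f(G) − Σ_{S : w(S)=0} y(S) ≤ χ_f(G), M ⪰ 0, M √w = √w, M ⪯ I, Mᵢⱼ = 0 for every edge ij, and ⟨√w √wᵀ, M⟩ = wᵀ𝟙.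 -/
/-- The rank-one matrix `√w √wᵀ`. -/
noncomputable def sqrtRank1 {n : ℕ} (w : Fin n → ℝ) : Matrix (Fin n) (Fin n) ℝ :=
  Matrix.of fun i j => Real.sqrt (w i) * Real.sqrt (w j)

/-- The fractional chromatic number of `G`: the infimum of the total weight `𝟙ᵀy`
over nonnegative fractional colourings `y` indexed by independent sets. -/
noncomputable def fracChrom {n : ℕ} (G : SimpleGraph (Fin n)) : ℝ :=
  sInf {t : ℝ | ∃ y : Finset (Fin n) → ℝ, (∀ S, 0 ≤ y S) ∧
    (∀ S, y S ≠ 0 → ∀ u ∈ S, ∀ v ∈ S, ¬ G.Adj u v) ∧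
    (∀ v, 1 ≤ ∑ S ∈ Finset.univ.filter (fun S => v ∈ S), y S) ∧
    t = ∑ S, y S}

open scoped Classical in
/-- The matrix `M = Σ_{S : w(S) ≠ 0} y(S) · Diag(χ_S) √w √wᵀ Diag(χ_S) / w(S)`. -/
noncomputable def fracMatrix {n : ℕ} (w : Fin n → ℝ) (y : Finset (Fin n) → ℝ) :
    Matrix (Fin n) (Fin n) ℝ :=
  ∑ S ∈ Finset.univ.filter (fun S : Finset (Fin n) => (∑ v ∈ S, w v) ≠ 0),
    (y S / ∑ v ∈ S, w v) •
      Matrix.of (fun i j => (if i ∈ S then 1 else 0) * (Real.sqrt (w i) * Real.sqrt (w j)) *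
        (if j ∈ S then 1 else 0))

open Matrix

section LineProj

variable {ι : Type*} [Fintype ι]

-- The orthogonal projection onto `ℝ ∙ a`; since `0⁻¹ = 0`, `lineProj 0 = 0`.
noncomputable def lineProj (a : ι → ℝ) : Matrix ι ι ℝ := (a ⬝ᵥ a)⁻¹ • vecMulVec a a

lemma posSemidef_lineProj (a : ι → ℝ) : (lineProj a).PosSemidef :=
  (posSemidef_vecMulVec_self_star a).smul (inv_nonneg.2 (dotProduct_self_star_nonneg a))

lemma trace_lineProj (a : ι → ℝ) : (lineProj a).trace = (a ⬝ᵥ a)⁻¹ * (a ⬝ᵥ a) := by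
  rw [lineProj, trace_smul, trace_vecMulVec, smul_eq_mul]

lemma lineProj_mulVec_of_dotProduct_eq {a x : ι → ℝ} (h : a ⬝ᵥ x = a ⬝ᵥ a) :
    lineProj a *ᵥ x = a := by
  by_cases ha : a = 0
  · simp [ha, lineProj]
  rw [lineProj, smul_mulVec, vecMulVec_mulVec, h]
  ext i
  simp [inv_mul_cancel_left₀ (dotProduct_self_eq_zero.not.2 ha)]

lemma dotProduct_eq_sum_of_support_subset {S : Finset ι} {a : ι → ℝ} (ha : ∀ i ∉ S, a i = 0)
    (x : ι → ℝ) : a ⬝ᵥ x = ∑ i ∈ S, a i * x i :=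
  (Finset.sum_subset (Finset.subset_univ S) fun i _ hi => by simp [ha i hi]).symm

lemma posSemidef_diagonal_indicator_sub_lineProj [DecidableEq ι] (S : Finset ι) {a : ι → ℝ}
    (ha : ∀ i ∉ S, a i = 0) :
    (diagonal (fun i => if i ∈ S then 1 else 0) - lineProj a).PosSemidef := by
  refine .of_dotProduct_mulVec_nonneg ((PosSemidef.diagonal fun i => ?_).isHermitian.sub
    (posSemidef_lineProj a).isHermitian) fun x => ?_
  · dsimp; split_ifs <;> norm_num
  have hCS : (a ⬝ᵥ x) ^ 2 ≤ (a ⬝ᵥ a) * ∑ i ∈ S, x i ^ 2 := by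
    rw [dotProduct_eq_sum_of_support_subset ha, dotProduct_eq_sum_of_support_subset ha]
    simpa [sq] using Finset.sum_mul_sq_le_sq_mul_sq S a x
  have hquad : x ⬝ᵥ (diagonal (fun i => if i ∈ S then 1 else 0) *ᵥ x) = ∑ i ∈ S, x i ^ 2 := by
    simp [dotProduct, mulVec_diagonal, sq, Finset.sum_ite_mem]
  rw [star_trivial, sub_mulVec, dotProduct_sub, hquad, lineProj, smul_mulVec, vecMulVec_mulVec]
  simp only [op_smul_eq_smul, dotProduct_smul, smul_eq_mul, sub_nonneg]
  rw [dotProduct_comm x a, ← sq]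
  have hnn : 0 ≤ a ⬝ᵥ a := Fintype.sum_nonneg fun i => mul_self_nonneg (a i)
  rcases hnn.eq_or_lt with h | h
  · rw [← h, _root_.inv_zero, zero_mul]; positivity
  · rwa [inv_mul_le_iff₀ h]

end LineProj

lemma Matrix.trace_vecMulVec_mul {ι R : Type*} [Fintype ι] [CommSemiring R] (a b : ι → R)
    (M : Matrix ι ι R) : (vecMulVec a b * M).trace = b ⬝ᵥ (M *ᵥ a) := by
  rw [vecMulVec_mul, trace_vecMulVec, dotProduct_comm, dotProduct_mulVec]

section Cover

variable {ι : Type*} [Fintype ι] [DecidableEq ι] {y : Finset ι → ℝ}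

lemma sum_mul_ite_mem (hy : ∀ v, ∑ S ∈ Finset.univ.filter (fun S => v ∈ S), y S = 1)
    (i : ι) (c : ℝ) : ∑ S, y S * (if i ∈ S then c else 0) = c := by
  simp_rw [mul_ite, mul_zero]
  rw [← Finset.sum_filter, ← Finset.sum_mul, hy, one_mul]

lemma sum_smul_diagonal_indicator
    (hy : ∀ v, ∑ S ∈ Finset.univ.filter (fun S => v ∈ S), y S = 1) :
    ∑ S, y S • diagonal (fun i => if i ∈ S then (1 : ℝ) else 0) = 1 := by
  ext i j
  rcases eq_or_ne i j with rfl | hij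
  · simp only [Matrix.sum_apply, Matrix.smul_apply, diagonal_apply_eq, smul_eq_mul, one_apply_eq]
    exact sum_mul_ite_mem hy i 1
  · simp [Matrix.sum_apply, hij]

lemma sum_smul_ite_mem (hy : ∀ v, ∑ S ∈ Finset.univ.filter (fun S => v ∈ S), y S = 1)
    (f : ι → ℝ) : ∑ S, y S • (fun i => if i ∈ S then f i else 0) = f := by
  ext i
  simp only [Finset.sum_apply, Pi.smul_apply, smul_eq_mul]
  exact sum_mul_ite_mem hy i (f i)

end Cover

section SqrtOn

variable {ι : Type*} [Fintype ι] [DecidableEq ι]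

-- The vector `Diag(χ_S) √w`.
noncomputable def sqrtOn (w : ι → ℝ) (S : Finset ι) : ι → ℝ :=
  fun i => if i ∈ S then √(w i) else 0

lemma sqrtOn_dotProduct_self {w : ι → ℝ} (hw : ∀ i, 0 ≤ w i) (S : Finset ι) :
    sqrtOn w S ⬝ᵥ sqrtOn w S = ∑ i ∈ S, w i := by
  simp [sqrtOn, dotProduct, Real.mul_self_sqrt (hw _), Finset.sum_ite_mem]

lemma sqrtOn_dotProduct_sqrt (w : ι → ℝ) (S : Finset ι) :
    sqrtOn w S ⬝ᵥ (fun i => √(w i)) = sqrtOn w S ⬝ᵥ sqrtOn w S := by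
  simp only [sqrtOn, dotProduct]
  refine Finset.sum_congr rfl fun i _ => ?_
  split_ifs <;> simp

end SqrtOn

section FracMatrix

variable {n : ℕ} {w : Fin n → ℝ} {y : Finset (Fin n) → ℝ}

lemma fracMatrix_eq_sum_smul_lineProj (hw : ∀ i, 0 ≤ w i) :
    fracMatrix w y = ∑ S, y S • lineProj (sqrtOn w S) := by
  rw [fracMatrix, Finset.sum_filter]
  refine Finset.sum_congr rfl fun S _ => ?_
  rw [lineProj, sqrtOn_dotProduct_self hw]
  split_ifs with hS
  · ext i j
    simp only [Matrix.smul_apply, of_apply, vecMulVec_apply, sqrtOn, smul_eq_mul]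
    split_ifs <;> ring
  · simp [not_not.1 hS]

lemma posSemidef_fracMatrix (hw : ∀ i, 0 ≤ w i) (hy0 : ∀ S, 0 ≤ y S) :
    (fracMatrix w y).PosSemidef := by
  rw [fracMatrix_eq_sum_smul_lineProj hw]
  exact posSemidef_sum _ fun S _ => (posSemidef_lineProj _).smul (hy0 S)

lemma fracMatrix_mulVec_sqrt (hw : ∀ i, 0 ≤ w i)
    (hyN : ∀ v, ∑ S ∈ Finset.univ.filter (fun S => v ∈ S), y S = 1) :
    fracMatrix w y *ᵥ (fun i => √(w i)) = fun i => √(w i) := by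
  rw [fracMatrix_eq_sum_smul_lineProj hw, sum_mulVec]
  simp_rw [smul_mulVec, lineProj_mulVec_of_dotProduct_eq (sqrtOn_dotProduct_sqrt w _)]
  exact sum_smul_ite_mem hyN _

lemma posSemidef_one_sub_fracMatrix (hw : ∀ i, 0 ≤ w i) (hy0 : ∀ S, 0 ≤ y S)
    (hyN : ∀ v, ∑ S ∈ Finset.univ.filter (fun S => v ∈ S), y S = 1) :
    (1 - fracMatrix w y).PosSemidef := by
  rw [← sum_smul_diagonal_indicator hyN, fracMatrix_eq_sum_smul_lineProj hw,
    ← Finset.sum_sub_distrib]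
  refine posSemidef_sum _ fun S _ => ?_
  rw [← smul_sub]
  exact (posSemidef_diagonal_indicator_sub_lineProj S fun i hi => if_neg hi).smul (hy0 S)

open scoped Classical in
lemma trace_fracMatrix (hw : ∀ i, 0 ≤ w i) :
    (fracMatrix w y).trace =
      ∑ S, y S - ∑ S ∈ Finset.univ.filter (fun S : Finset (Fin n) => ∑ v ∈ S, w v = 0), y S := by
  rw [fracMatrix_eq_sum_smul_lineProj hw, trace_sum, Finset.sum_filter, ← Finset.sum_sub_distrib]
  refine Finset.sum_congr rfl fun S _ => ?_
  rw [trace_smul, trace_lineProj, sqrtOn_dotProduct_self hw, smul_eq_mul]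
  split_ifs with h
  · simp [h]
  · rw [inv_mul_cancel₀ h]; ring

lemma fracMatrix_apply_eq_zero_of_adj {G : SimpleGraph (Fin n)} (hw : ∀ i, 0 ≤ w i)
    (hyind : ∀ S, y S ≠ 0 → ∀ u ∈ S, ∀ v ∈ S, ¬ G.Adj u v) {i j : Fin n} (hij : G.Adj i j) :
    fracMatrix w y i j = 0 := by
  rw [fracMatrix_eq_sum_smul_lineProj hw, Matrix.sum_apply]
  refine Finset.sum_eq_zero fun S _ => ?_
  rcases eq_or_ne (y S) 0 with hS | hS
  · simp [hS]
  have : i ∉ S ∨ j ∉ S := by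
    by_contra! h
    exact hyind S hS i h.1 j h.2 hij
  rcases this with h | h <;> simp [lineProj, vecMulVec_apply, sqrtOn, h]

lemma trace_sqrtRank1_mul_fracMatrix (hw : ∀ i, 0 ≤ w i)
    (hyN : ∀ v, ∑ S ∈ Finset.univ.filter (fun S => v ∈ S), y S = 1) :
    (sqrtRank1 w * fracMatrix w y).trace = ∑ i, w i := by
  rw [show sqrtRank1 w = vecMulVec (fun i => √(w i)) (fun i => √(w i)) from rfl,
    trace_vecMulVec_mul, fracMatrix_mulVec_sqrt hw hyN]
  simp [dotProduct, Real.mul_self_sqrt (hw _)]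

end FracMatrix

open scoped Classical in
/-- Theorem 3 of the paper: the matrix `M` built from an optimal fractional colouring
`y` (with `Ny = 𝟙`, `𝟙ᵀy = χ_f(G)`) satisfies `tr M = χ_f(G) − Σ_{S : w(S)=0} y(S) ≤ χ_f(G)`,
`0 ⪯ M ⪯ I`, `M √w = √w`, `Mᵢⱼ = 0` on edges, and `⟨√w √wᵀ, M⟩ = wᵀ𝟙`. -/
theorem stmt8 {n : ℕ} (G : SimpleGraph (Fin n)) (w : Fin n → ℝ) (hw : ∀ i, 0 ≤ w i)
    (y : Finset (Fin n) → ℝ) (hy0 : ∀ S, 0 ≤ y S)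
    (hyind : ∀ S, y S ≠ 0 → ∀ u ∈ S, ∀ v ∈ S, ¬ G.Adj u v)
    (hyN : ∀ v, ∑ S ∈ Finset.univ.filter (fun S => v ∈ S), y S = 1)
    (hyopt : ∑ S, y S = fracChrom G) :
    (fracMatrix w y).trace =
        fracChrom G - (∑ S ∈ Finset.univ.filter (fun S : Finset (Fin n) => (∑ v ∈ S, w v) = 0), y S) ∧
    (fracMatrix w y).trace ≤ fracChrom G ∧
    (fracMatrix w y).PosSemidef ∧
    (fracMatrix w y).mulVec (fun i => Real.sqrt (w i)) = (fun i => Real.sqrt (w i)) ∧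
    (1 - fracMatrix w y).PosSemidef ∧
    (∀ i j, G.Adj i j → fracMatrix w y i j = 0) ∧
    (sqrtRank1 w * fracMatrix w y).trace = ∑ i, w i := by
  have htrace := trace_fracMatrix (y := y) hw
  rw [hyopt] at htrace
  refine ⟨htrace, ?_, posSemidef_fracMatrix hw hy0, fracMatrix_mulVec_sqrt hw hyN,
    posSemidef_one_sub_fracMatrix hw hy0 hyN, fun i j => fracMatrix_apply_eq_zero_of_adj hw hyind,
    trace_sqrtRank1_mul_fracMatrix hw hyN⟩
  rw [htrace]
  exact sub_le_self _ (Finset.sum_nonneg fun S _ => hy0 S)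
end

section
/- Let G be a graph on n vertices and k = χ_f(G) its fractional chromatic number. Then for every nonnegative weight vector w ∈ ℝ₊^V, ϑ_k(G;w) ≥ wᵀ𝟙, where ϑ_k(G;w) = sup{ ⟨√w √wᵀ, X⟩ : X symmetric, tr X = k, Xᵢⱼ = 0 ∀ ij ∈ E(G), 0 ⪯ X ⪯ I }. -/
/-- The weighted Narasimhan–Manber parameter `ϑ_k(G; w)`, in its SDP (dual) formulation:
the supremum of `⟨√w √wᵀ, X⟩` over symmetric `X` with `tr X = k`, `X` vanishing on the
edges of `G`, and `0 ⪯ X ⪯ I`. -/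
noncomputable def thetaSup {n : ℕ} (G : SimpleGraph (Fin n)) (w : Fin n → ℝ) (k : ℝ) : ℝ :=
  sSup {r : ℝ | ∃ X : Matrix (Fin n) (Fin n) ℝ, X.IsSymm ∧ X.trace = k ∧
    (∀ i j, G.Adj i j → X i j = 0) ∧ X.PosSemidef ∧ (1 - X).PosSemidef ∧
    r = (sqrtRank1 w * X).trace}

/-!
Take a fractional colouring `y` of total `t`. Thinning every colour class at random, keeping
each vertex `v` independently with probability `1 / cov(v)`, turns it into a fractional colouring
`z` of total `t' ≤ t` that covers every vertex exactly once. With `q_S` the unit vector along `√w`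
restricted to `S`, the matrix `X = (k / t') ∑_S z_S q_S q_Sᵀ` vanishes on edges (each `S` is
independent), has trace `k`, satisfies `X ⪯ I` by Cauchy–Schwarz (every vertex is covered at most
once), and has objective value `(k / t') wᵀ𝟙`. As `t` approaches `k = χ_f(G)` this tends to `wᵀ𝟙`.
-/

open Finset Matrix Pointwise

section FractionalCover

variable {α : Type*} [DecidableEq α]

/-- The probability that keeping each `i ∈ S` independently with probability `p i` leaves
exactly `T`. -/
noncomputable def thinning (p : α → ℝ) (S T : Finset α) : ℝ :=
  if T ⊆ S then (∏ i ∈ T, p i) * ∏ i ∈ S \ T, (1 - p i) else 0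

lemma thinning_nonneg {p : α → ℝ} (hp : ∀ i, 0 ≤ p i ∧ p i ≤ 1) (S T : Finset α) :
    0 ≤ thinning p S T := by
  unfold thinning
  split_ifs
  · exact mul_nonneg (prod_nonneg fun i _ => (hp i).1)
      (prod_nonneg fun i _ => sub_nonneg.2 (hp i).2)
  · exact le_rfl

variable [Fintype α]

lemma sum_thinning (p : α → ℝ) (S : Finset α) : ∑ T, thinning p S T = 1 := by
  simp only [thinning]
  rw [← Finset.sum_filter, filter_subset_univ, ← prod_add]
  simp

lemma sum_thinning_of_mem (p : α → ℝ) {S : Finset α} {u : α} (hu : u ∈ S) :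
    ∑ T with u ∈ T, thinning p S T = p u := by
  -- zeroing the factor `1 - p u` kills exactly the subsets `T` that miss `u`
  have key := prod_add p (fun i => if i = u then 0 else 1 - p i) S
  rw [prod_congr rfl (g := fun i => if i = u then p u else 1)
    (by intro i _; split_ifs <;> simp_all), prod_ite_eq', if_pos hu] at key
  rw [key, ← filter_subset_univ, Finset.sum_filter, Finset.sum_filter]
  refine sum_congr rfl fun T _ => ?_
  simp only [thinning]
  split_ifs with huT hTS
  · congr 1
    exact prod_congr rfl fun i hi => (if_neg (by rintro rfl; exact (mem_sdiff.1 hi).2 huT)).symm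
  · rfl
  · rw [Finset.prod_eq_zero (mem_sdiff.2 ⟨hu, huT⟩) (by simp), mul_zero]
  · rfl

lemma sum_filter_mem_thinning (p : α → ℝ) (S : Finset α) (u : α) :
    ∑ T with u ∈ T, thinning p S T = if u ∈ S then p u else 0 := by
  split_ifs with hu
  · exact sum_thinning_of_mem p hu
  · exact sum_eq_zero fun T hT => if_neg fun hTS => hu (hTS (mem_filter.1 hT).2)

noncomputable def coverage (y : Finset α → ℝ) (v : α) : ℝ :=
  ∑ S with v ∈ S, y S

lemma sum_mul_sum_eq_sum_coverage_mul (y : Finset α → ℝ) (f : α → ℝ) :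
    ∑ S, y S * ∑ i ∈ S, f i = ∑ i, coverage y i * f i := by
  simp_rw [coverage, Finset.sum_mul, Finset.sum_filter, Finset.mul_sum, ← Finset.sum_filter]
  exact Finset.sum_comm' (by simp)

lemma coverage_const_mul (c : ℝ) (y : Finset α → ℝ) (v : α) :
    coverage (fun S => c * y S) v = c * coverage y v := by
  simp only [coverage, Finset.mul_sum]

noncomputable def thin (p : α → ℝ) (y : Finset α → ℝ) (T : Finset α) : ℝ :=
  ∑ S, y S * thinning p S T

lemma thin_nonneg {p : α → ℝ} (hp : ∀ i, 0 ≤ p i ∧ p i ≤ 1) {y : Finset α → ℝ}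
    (hy : ∀ S, 0 ≤ y S) (T : Finset α) : 0 ≤ thin p y T :=
  sum_nonneg fun S _ => mul_nonneg (hy S) (thinning_nonneg hp S T)

lemma exists_subset_of_thin_ne_zero {p : α → ℝ} {y : Finset α → ℝ} {T : Finset α}
    (hT : thin p y T ≠ 0) : ∃ S, y S ≠ 0 ∧ T ⊆ S := by
  obtain ⟨S, -, hS⟩ := exists_ne_zero_of_sum_ne_zero hT
  refine ⟨S, left_ne_zero_of_mul hS, ?_⟩
  by_contra hTS
  exact right_ne_zero_of_mul hS (if_neg hTS)

lemma sum_thin (p : α → ℝ) (y : Finset α → ℝ) : ∑ T, thin p y T = ∑ S, y S := by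
  simp only [thin]
  rw [Finset.sum_comm]
  simp only [← Finset.mul_sum, sum_thinning, mul_one]

lemma coverage_thin (p : α → ℝ) (y : Finset α → ℝ) (u : α) :
    coverage (thin p y) u = p u * coverage y u := by
  simp only [coverage, thin]
  rw [Finset.sum_comm]
  simp_rw [← Finset.mul_sum, sum_filter_mem_thinning]
  rw [Finset.mul_sum, Finset.sum_filter]
  exact sum_congr rfl fun S _ => by split_ifs <;> ring

theorem exists_exact_cover {P : Finset α → Prop} (hP : ∀ S T, T ⊆ S → P S → P T)
    {y : Finset α → ℝ} (h0 : ∀ S, 0 ≤ y S) (hy : ∀ S, y S ≠ 0 → P S)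
    (hcov : ∀ v, 1 ≤ coverage y v) :
    ∃ z : Finset α → ℝ, (∀ S, 0 ≤ z S) ∧ (∀ S, z S ≠ 0 → S.Nonempty ∧ P S) ∧
      (∀ v, coverage z v = 1) ∧ ∑ S, z S ≤ ∑ S, y S := by
  set p := fun v => (coverage y v)⁻¹
  have hp : ∀ v, 0 ≤ p v ∧ p v ≤ 1 := fun v =>
    ⟨inv_nonneg.2 (zero_le_one.trans (hcov v)), inv_le_one_of_one_le₀ (hcov v)⟩
  -- the empty set covers nothing, so its mass can be dropped
  set z := fun T => if T = ∅ then 0 else thin p y T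
  have hz0 : ∀ T, 0 ≤ z T := fun T => by
    simp only [z]
    split_ifs
    exacts [le_rfl, thin_nonneg hp h0 T]
  refine ⟨z, hz0, fun T hT => ?_, fun v => ?_, ?_⟩
  · rw [ite_ne_left_iff] at hT
    obtain ⟨S, hS, hTS⟩ := exists_subset_of_thin_ne_zero hT.2.symm
    exact ⟨nonempty_iff_ne_empty.2 hT.1, hP S T hTS (hy S hS)⟩
  · have : coverage z v = coverage (thin p y) v :=
      sum_congr rfl fun T hT => if_neg (ne_empty_of_mem (mem_filter.1 hT).2)
    rw [this, coverage_thin, inv_mul_cancel₀ (zero_lt_one.trans_le (hcov v)).ne']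
  · calc ∑ T, z T ≤ ∑ T, thin p y T :=
          sum_le_sum fun T _ => by simp only [z]; split_ifs; exacts [thin_nonneg hp h0 T, le_rfl]
      _ = ∑ S, y S := sum_thin p y

def IsFracColoring (G : SimpleGraph α) (y : Finset α → ℝ) : Prop :=
  (∀ S, 0 ≤ y S) ∧ (∀ S, y S ≠ 0 → ∀ u ∈ S, ∀ v ∈ S, ¬ G.Adj u v) ∧ ∀ v, 1 ≤ coverage y v

lemma isFracColoring_singletons (G : SimpleGraph α) :
    IsFracColoring G fun S => if S.card = 1 then 1 else 0 := by
  have h0 : ∀ S : Finset α, 0 ≤ if S.card = 1 then (1 : ℝ) else 0 := fun S => by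
    split_ifs <;> norm_num
  refine ⟨h0, fun S hS u hu v hv => ?_, fun v => ?_⟩
  · obtain ⟨x, rfl⟩ := card_eq_one.1 (of_not_not fun h => hS (if_neg h))
    rw [mem_singleton.1 hu, mem_singleton.1 hv]
    exact G.irrefl
  · calc (1 : ℝ) = if ({v} : Finset α).card = 1 then 1 else 0 := by simp
      _ ≤ coverage _ v := single_le_sum (fun S _ => h0 S) (by simp)

lemma one_le_sum_of_isFracColoring {G : SimpleGraph α} {y : Finset α → ℝ}
    (hy : IsFracColoring G y) (v : α) : 1 ≤ ∑ S, y S :=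
  (hy.2.2 v).trans (sum_le_sum_of_subset_of_nonneg (filter_subset _ _) fun S _ _ => hy.1 S)

end FractionalCover

section PackingMatrix

variable {α : Type*} [Fintype α]

lemma exists_unit_vector_sq_dotProduct_eq [DecidableEq α] {S : Finset α} (hS : S.Nonempty)
    (a : α → ℝ) :
    ∃ q : α → ℝ, (∀ i ∉ S, q i = 0) ∧ q ⬝ᵥ q = 1 ∧ (q ⬝ᵥ a) ^ 2 = ∑ i ∈ S, a i ^ 2 := by
  set N := ∑ i ∈ S, a i ^ 2
  have hN0 : 0 ≤ N := sum_nonneg fun i _ => sq_nonneg (a i)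
  rcases hN0.eq_or_lt with hN | hN
  · obtain ⟨i₀, hi₀⟩ := hS
    have ha : a i₀ = 0 := pow_eq_zero_iff two_ne_zero |>.1 <|
      (sum_eq_zero_iff_of_nonneg fun i _ => sq_nonneg (a i)).1 hN.symm i₀ hi₀
    refine ⟨Pi.single i₀ 1, fun i hi => Pi.single_eq_of_ne (by rintro rfl; exact hi hi₀) _,
      by simp, ?_⟩
    simp [ha, ← hN]
  · set b : α → ℝ := fun i => if i ∈ S then a i else 0
    have hbb : b ⬝ᵥ b = N := by simp [b, N, dotProduct, Finset.sum_ite_mem, sq]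
    have hba : b ⬝ᵥ a = N := by simp [b, N, dotProduct, Finset.sum_ite_mem, sq]
    refine ⟨(√N)⁻¹ • b, fun i hi => by simp [b, hi], ?_, ?_⟩
    · rw [smul_dotProduct, dotProduct_smul, hbb, smul_eq_mul, smul_eq_mul, ← mul_assoc,
        ← mul_inv, Real.mul_self_sqrt hN0, inv_mul_cancel₀ hN.ne']
    · rw [smul_dotProduct, hba, smul_eq_mul, mul_pow, inv_pow, Real.sq_sqrt hN0, sq,
        ← mul_assoc, inv_mul_cancel₀ hN.ne', one_mul]

lemma sq_dotProduct_le_of_support {S : Finset α} {q : α → ℝ} (hq : ∀ i ∉ S, q i = 0)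
    (h1 : q ⬝ᵥ q = 1) (x : α → ℝ) : (q ⬝ᵥ x) ^ 2 ≤ ∑ i ∈ S, x i ^ 2 := by
  have hS : ∀ z : α → ℝ, q ⬝ᵥ z = ∑ i ∈ S, q i * z i := fun z =>
    (sum_subset (subset_univ S) fun i _ hi => by simp [hq i hi]).symm
  have hq1 : ∑ i ∈ S, q i ^ 2 = 1 := by simp only [← h1, hS, sq]
  calc (q ⬝ᵥ x) ^ 2 ≤ (∑ i ∈ S, q i ^ 2) * ∑ i ∈ S, x i ^ 2 := hS x ▸ sum_mul_sq_le_sq_mul_sq S q x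
    _ = ∑ i ∈ S, x i ^ 2 := by rw [hq1, one_mul]

lemma dotProduct_mulVec_sum_smul_vecMulVec {ι : Type*} [Fintype ι] (y : ι → ℝ) (q : ι → α → ℝ)
    (x : α → ℝ) :
    x ⬝ᵥ ((∑ S, y S • vecMulVec (q S) (q S)) *ᵥ x) = ∑ S, y S * (q S ⬝ᵥ x) ^ 2 := by
  simp only [dotProduct_comm x, sum_mulVec, sum_dotProduct, smul_mulVec, vecMulVec_mulVec,
    op_smul_eq_smul, smul_dotProduct, smul_eq_mul, sq]

theorem exists_matrix_of_coverage_le_one [DecidableEq α] (G : SimpleGraph α) (a : α → ℝ)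
    {y : Finset α → ℝ} (h0 : ∀ S, 0 ≤ y S)
    (hy : ∀ S, y S ≠ 0 → S.Nonempty ∧ ∀ u ∈ S, ∀ v ∈ S, ¬ G.Adj u v)
    (hcov : ∀ v, coverage y v ≤ 1) :
    ∃ X : Matrix α α ℝ, X.IsSymm ∧ X.trace = ∑ S, y S ∧ (∀ i j, G.Adj i j → X i j = 0) ∧
      X.PosSemidef ∧ (1 - X).PosSemidef ∧ a ⬝ᵥ (X *ᵥ a) = ∑ i, coverage y i * a i ^ 2 := by
  have hq : ∀ S, ∃ q : α → ℝ, y S ≠ 0 →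
      (∀ i ∉ S, q i = 0) ∧ q ⬝ᵥ q = 1 ∧ (q ⬝ᵥ a) ^ 2 = ∑ i ∈ S, a i ^ 2 := fun S => by
    by_cases hS : y S = 0
    · exact ⟨0, fun h => absurd hS h⟩
    · obtain ⟨q, hq⟩ := exists_unit_vector_sq_dotProduct_eq (hy S hS).1 a
      exact ⟨q, fun _ => hq⟩
  choose q hq using hq
  set X := ∑ S, y S • vecMulVec (q S) (q S)
  have hquad := dotProduct_mulVec_sum_smul_vecMulVec y q
  have hpsd : X.PosSemidef := posSemidef_sum _ fun S _ => by
    simpa using (posSemidef_vecMulVec_self_star (q S)).smul (h0 S)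
  refine ⟨X, isHermitian_iff_isSymm.1 hpsd.1, ?_, fun i j hij => ?_, hpsd, ?_, ?_⟩
  · simp only [X, trace_sum, trace_smul, trace_vecMulVec, smul_eq_mul]
    refine sum_congr rfl fun S _ => ?_
    rcases eq_or_ne (y S) 0 with h | h
    · simp [h]
    · rw [(hq S h).2.1, mul_one]
  · simp only [X, Matrix.sum_apply, Matrix.smul_apply, vecMulVec_apply, smul_eq_mul]
    refine sum_eq_zero fun S _ => ?_
    rcases eq_or_ne (y S) 0 with h | h
    · simp [h]
    · by_cases hi : i ∈ S
      · rw [(hq S h).1 j fun hj => (hy S h).2 i hi j hj hij, mul_zero, mul_zero]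
      · rw [(hq S h).1 i hi, zero_mul, mul_zero]
  · refine PosSemidef.of_dotProduct_mulVec_nonneg (isHermitian_one.sub hpsd.1) fun x => ?_
    rw [star_trivial, sub_mulVec, one_mulVec, dotProduct_sub, sub_nonneg, hquad]
    calc ∑ S, y S * (q S ⬝ᵥ x) ^ 2 ≤ ∑ S, y S * ∑ i ∈ S, x i ^ 2 := sum_le_sum fun S _ => by
          rcases eq_or_ne (y S) 0 with h | h
          · simp [h]
          · exact mul_le_mul_of_nonneg_left
              (sq_dotProduct_le_of_support (hq S h).1 (hq S h).2.1 x) (h0 S)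
      _ = ∑ i, coverage y i * x i ^ 2 := sum_mul_sum_eq_sum_coverage_mul y _
      _ ≤ ∑ i, x i ^ 2 := sum_le_sum fun i _ => mul_le_of_le_one_left (sq_nonneg _) (hcov i)
      _ = x ⬝ᵥ x := by simp [dotProduct, sq]
  · rw [hquad, ← sum_mul_sum_eq_sum_coverage_mul]
    refine sum_congr rfl fun S _ => ?_
    rcases eq_or_ne (y S) 0 with h | h
    · simp [h]
    · rw [(hq S h).2.2]

end PackingMatrix

section ThetaFracChrom

variable {n : ℕ}

lemma fracChrom_eq_sInf (G : SimpleGraph (Fin n)) :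
    fracChrom G = sInf ((fun y => ∑ S, y S) '' {y | IsFracColoring G y}) := by
  simp only [fracChrom, IsFracColoring, coverage, Set.image, Set.mem_ofPred_eq, and_assoc, eq_comm]

lemma fracChrom_nonneg (G : SimpleGraph (Fin n)) : 0 ≤ fracChrom G := by
  rw [fracChrom_eq_sInf]
  exact Real.sInf_nonneg <| Set.forall_mem_image.2 fun y hy => sum_nonneg fun S _ => hy.1 S

lemma fracChrom_le {G : SimpleGraph (Fin n)} {y : Finset (Fin n) → ℝ} (hy : IsFracColoring G y) :
    fracChrom G ≤ ∑ S, y S := by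
  rw [fracChrom_eq_sInf]
  exact csInf_le ⟨0, Set.forall_mem_image.2 fun y hy => sum_nonneg fun S _ => hy.1 S⟩ ⟨y, hy, rfl⟩

lemma one_le_fracChrom [Nonempty (Fin n)] (G : SimpleGraph (Fin n)) : 1 ≤ fracChrom G := by
  rw [fracChrom_eq_sInf]
  exact le_csInf ⟨_, _, isFracColoring_singletons G, rfl⟩ <| Set.forall_mem_image.2 fun y hy =>
    one_le_sum_of_isFracColoring hy (Classical.arbitrary _)

lemma trace_sqrtRank1_mul (w : Fin n → ℝ) (X : Matrix (Fin n) (Fin n) ℝ) :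
    (sqrtRank1 w * X).trace = (fun i => √(w i)) ⬝ᵥ (X *ᵥ fun i => √(w i)) := by
  rw [show sqrtRank1 w = vecMulVec (fun i => √(w i)) (fun i => √(w i)) from rfl, trace_mul_comm,
    mul_vecMulVec, trace_vecMulVec, dotProduct_comm]

lemma le_thetaSup (G : SimpleGraph (Fin n)) (w : Fin n → ℝ) {k : ℝ}
    {X : Matrix (Fin n) (Fin n) ℝ} (hsymm : X.IsSymm) (htr : X.trace = k)
    (hadj : ∀ i j, G.Adj i j → X i j = 0) (hX : X.PosSemidef) (hX1 : (1 - X).PosSemidef) :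
    (sqrtRank1 w * X).trace ≤ thetaSup G w k := by
  refine le_csSup ⟨(fun i => √(w i)) ⬝ᵥ fun i => √(w i), ?_⟩ ⟨X, hsymm, htr, hadj, hX, hX1, rfl⟩
  rintro _ ⟨Y, -, -, -, -, hY1, rfl⟩
  have := hY1.dotProduct_mulVec_nonneg fun i => √(w i)
  rwa [star_trivial, sub_mulVec, one_mulVec, dotProduct_sub, sub_nonneg, ← trace_sqrtRank1_mul]
    at this

theorem fracChrom_div_mul_le_thetaSup (G : SimpleGraph (Fin n)) {w : Fin n → ℝ}
    (hw : ∀ i, 0 ≤ w i) {y : Finset (Fin n) → ℝ} (hy : IsFracColoring G y) :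
    fracChrom G / (∑ S, y S) * ∑ i, w i ≤ thetaSup G w (fracChrom G) := by
  set k := fracChrom G
  obtain ⟨z, hz0, hz, hzcov, hzy⟩ :=
    exists_exact_cover (P := fun S => ∀ u ∈ S, ∀ v ∈ S, ¬ G.Adj u v)
      (fun S T hTS hS u hu v hv => hS u (hTS hu) v (hTS hv)) hy.1 hy.2.1 hy.2.2
  set t := ∑ S, z S
  have hkt : k ≤ t := fracChrom_le ⟨hz0, fun S h => (hz S h).2, fun v => (hzcov v).ge⟩
  have hk0 : 0 ≤ k := fracChrom_nonneg G
  set c := k / t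
  have hc0 : 0 ≤ c := div_nonneg hk0 (hk0.trans hkt)
  have hct : c * t = k := by
    rcases (hk0.trans hkt).eq_or_lt with ht | ht
    · -- `k / 0 = 0`, but then `k = 0` as well
      have hk : k = 0 := le_antisymm (ht ▸ hkt) hk0
      simp [c, ← ht, hk]
    · exact div_mul_cancel₀ k ht.ne'
  obtain ⟨X, hXs, hXtr, hXe, hX, hX1, hXa⟩ :=
    exists_matrix_of_coverage_le_one G (fun i => √(w i)) (y := fun S => c * z S)
      (fun S => mul_nonneg hc0 (hz0 S)) (fun S h => hz S (right_ne_zero_of_mul h))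
      (fun v => by
        rw [coverage_const_mul, hzcov, mul_one]
        exact div_le_one_of_le₀ hkt (hk0.trans hkt))
  have hobj : (sqrtRank1 w * X).trace = c * ∑ i, w i := by
    simp [trace_sqrtRank1_mul, hXa, coverage_const_mul, hzcov, Real.sq_sqrt (hw _), mul_sum]
  calc k / (∑ S, y S) * ∑ i, w i ≤ c * ∑ i, w i := by
        refine mul_le_mul_of_nonneg_right ?_ (sum_nonneg fun i _ => hw i)
        exact div_le_of_le_mul₀ (hk0.trans (hkt.trans hzy)) hc0
          (hct ▸ mul_le_mul_of_nonneg_left hzy hc0)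
    _ ≤ thetaSup G w k :=
        hobj ▸ le_thetaSup G w hXs (by rw [hXtr, ← mul_sum, hct]) hXe hX hX1

end ThetaFracChrom

/-- Theorem 2 of the paper: for `k = χ_f(G)` and every nonnegative weight vector `w`,
`ϑ_k(G; w) ≥ wᵀ𝟙`. -/
theorem stmt9 {n : ℕ} (G : SimpleGraph (Fin n)) (w : Fin n → ℝ) (hw : ∀ i, 0 ≤ w i) :
    (∑ i, w i) ≤ thetaSup G w (fracChrom G) := by
  have hsingle := isFracColoring_singletons G
  have hθ : 0 ≤ thetaSup G w (fracChrom G) :=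
    le_trans (mul_nonneg (div_nonneg (fracChrom_nonneg G) (sum_nonneg fun S _ => hsingle.1 S))
      (sum_nonneg fun i _ => hw i)) (fracChrom_div_mul_le_thetaSup G hw hsingle)
  rcases isEmpty_or_nonempty (Fin n) with hn | hn
  · simpa using hθ
  refine le_of_mul_le_mul_left ?_ (zero_lt_one.trans_le (one_le_fracChrom G))
  calc fracChrom G * ∑ i, w i
      ≤ sInf (thetaSup G w (fracChrom G) • (fun y => ∑ S, y S) '' {y | IsFracColoring G y}) := by
        refine le_csInf (Set.Nonempty.smul_set ⟨_, _, hsingle, rfl⟩) ?_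
        rintro _ ⟨_, ⟨y, hy, rfl⟩, rfl⟩
        have ht := zero_lt_one.trans_le (one_le_sum_of_isFracColoring hy (Classical.arbitrary _))
        have := fracChrom_div_mul_le_thetaSup G hw hy
        rwa [div_mul_eq_mul_div, div_le_iff₀ ht] at this
    _ = fracChrom G * thetaSup G w (fracChrom G) := by
        rw [Real.sInf_smul_of_nonneg hθ, ← fracChrom_eq_sInf, smul_eq_mul, mul_comm]
end

section
/- Suppose m = h(G) − 1 ≥ 1 and there exists a symmetric matrix Z with Zᵢⱼ = 0 for all ij ∉ E(G), having a nonnegative top eigenvector v ≥ 0 for λ₁(Z), such that λ₁(Z) + Σ_{i=1}^{m−1} λ_{n+1−i}(Z) > 0. Let w ≥ 0 be such that √w is a scalar multiple of v scaled so that wᵀ𝟙 − λ₁(Z) ≥ −λₙ(Z). Then ϑ_m(G;w) ≤ Σ_{i=1}^{m} λᵢ(√w √wᵀ − Z) = wᵀ𝟙 − λ₁(Z) − Σ_{i=1}^{m−1} λ_{n+1−i}(Z) < wᵀ𝟙. -/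
/-- `h(G)`: the smallest integer `m ≥ 1` such that for every symmetric matrix `Z`
supported on the edges of `G`, `λ₁(Z) + λₙ(Z) + ⋯ + λₙ₋ₘ₊₂(Z) ≤ 0`. -/
noncomputable def hParam {n : ℕ} (G : SimpleGraph (Fin n)) : ℕ :=
  sInf {m : ℕ | 1 ≤ m ∧ ∀ Z : Matrix (Fin n) (Fin n) ℝ, Z.IsSymm →
    (∀ i j, ¬ G.Adj i j → Z i j = 0) →
    eigDesc Z 0 + ∑ i ∈ Finset.range (m - 1), eigDesc Z (n - 1 - i) ≤ 0}

/-- The weighted Narasimhan–Manber parameter `ϑ_k(G; w)` in its eigenvalue-sum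
(primal) form: the infimum of the sum of the `k` largest eigenvalues of
`√w √wᵀ + Y` over symmetric `Y` supported on the edges of `G`. -/
noncomputable def thetaInf {n : ℕ} (G : SimpleGraph (Fin n)) (w : Fin n → ℝ) (k : ℕ) : ℝ :=
  sInf {r : ℝ | ∃ Y : Matrix (Fin n) (Fin n) ℝ, Y.IsSymm ∧
    (∀ i j, ¬ G.Adj i j → Y i j = 0) ∧
    r = ∑ i ∈ Finset.range k, eigDesc (sqrtRank1 w + Y) i}

open Matrix Polynomial

namespace Matrix

variable {ι R K : Type*} [Fintype ι] [DecidableEq ι]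

theorem charpoly_neg [CommRing R] (M : Matrix ι ι R) :
    (-M).charpoly = (-1) ^ Fintype.card ι * M.charpoly.comp (-X) := by
  have h : (compRingHom (-X : R[X])).mapMatrix M.charmatrix = -(-M).charmatrix := by
    refine Matrix.ext fun i j => ?_
    rcases eq_or_ne i j with rfl | hij
    · simp only [RingHom.mapMatrix_apply, map_apply, coe_compRingHom, charmatrix_apply_eq,
        sub_comp, X_comp, C_comp, Matrix.neg_apply, map_neg]
      ring
    · simp [charmatrix_apply_ne _ _ _ hij]
  rw [charpoly, charpoly, ← coe_compRingHom_apply, RingHom.map_det, h, det_neg, ← mul_assoc,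
    ← mul_pow, neg_one_mul, neg_neg, one_pow, one_mul]

theorem det_add_vecMulVec_mul_of_mulVec_eq [Field K] {B : Matrix ι ι K} (hB : IsUnit B.det)
    {u : ι → K} {t : K} (ht : t ≠ 0) (hu : B *ᵥ u = t • u) (v : ι → K) :
    (B + vecMulVec u v).det * t = B.det * (t + v ⬝ᵥ u) := by
  have hinv : B⁻¹ *ᵥ u = t⁻¹ • u := by
    rw [← inv_smul_smul₀ ht (B⁻¹ *ᵥ u), ← mulVec_smul, ← hu, mulVec_mulVec,
      nonsing_inv_mul _ hB, one_mulVec]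
  rw [vecMulVec_eq Unit, det_add_replicateCol_mul_replicateRow hB, Matrix.mul_assoc,
    ← replicateCol_mulVec, hinv, det_unique (1 + _), add_apply, one_apply_eq,
    replicateRow_mul_replicateCol_apply, dotProduct_smul, smul_eq_mul]
  field_simp

theorem charpoly_vecMulVec_sub_mul [Field K] [Infinite K] {Z : Matrix ι ι K} {u : ι → K} {μ : K}
    (hu : Z *ᵥ u = μ • u) (v : ι → K) :
    (vecMulVec u v - Z).charpoly * (X + C μ) = (-Z).charpoly * (X + C μ - C (v ⬝ᵥ u)) := by
  set p := (-Z).charpoly * (X + C μ)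
  have hp : p ≠ 0 := ((charpoly_monic _).mul (monic_X_add_C μ)).ne_zero
  apply eq_of_infinite_eval_eq
  refine (finite_setOfPred_isRoot hp).infinite_compl.mono fun x hx => ?_
  replace hx : eval x p ≠ 0 := hx
  simp only [p, eval_mul, eval_charpoly, eval_add, eval_X, eval_C] at hx
  have hB : IsUnit (scalar ι x - -Z).det := isUnit_iff_ne_zero.mpr (left_ne_zero_of_mul hx)
  have hBu : (scalar ι x - -Z) *ᵥ (-u) = (x + μ) • (-u) := by
    rw [sub_neg_eq_add, add_mulVec, scalar_apply, mulVec_neg, mulVec_neg, hu]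
    ext i
    simp only [diagonal_const_mulVec, Pi.add_apply, Pi.neg_apply, Pi.smul_apply, smul_eq_mul]
    ring
  have hsplit : scalar ι x - (vecMulVec u v - Z) = (scalar ι x - -Z) + vecMulVec (-u) v := by
    ext i j
    simp only [scalar_apply, sub_apply, add_apply, neg_apply, diagonal_apply, vecMulVec_apply,
      Pi.neg_apply]
    ring
  simp only [Set.mem_ofPred_eq, eval_mul, eval_charpoly, eval_add, eval_sub, eval_X, eval_C, hsplit,
    det_add_vecMulVec_mul_of_mulVec_eq hB (right_ne_zero_of_mul hx) hBu, dotProduct_neg]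
  ring

theorem roots_charpoly_vecMulVec_sub [Field K] [Infinite K] {Z : Matrix ι ι K} {u : ι → K} {μ : K}
    (hu : Z *ᵥ u = μ • u) (v : ι → K) {T : Multiset K} (hZ : Z.charpoly.roots = μ ::ₘ T) :
    (vecMulVec u v - Z).charpoly.roots = (v ⬝ᵥ u - μ) ::ₘ T.map Neg.neg := by
  have h := congrArg roots (charpoly_vecMulVec_sub_mul hu v)
  have hneg : (-Z).charpoly.roots = -μ ::ₘ T.map Neg.neg := by
    rw [charpoly_neg, ← C_1, ← C_neg, ← C_pow,
      roots_C_mul _ (pow_ne_zero _ (neg_ne_zero.2 one_ne_zero)), roots_comp_neg_X, hZ,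
      Multiset.map_cons]
  rw [show X + C μ = X - C (-μ) by rw [C_neg, sub_neg_eq_add],
    show X - C (-μ) - C (v ⬝ᵥ u) = X - C (v ⬝ᵥ u - μ) by rw [C_sub, C_neg]; ring,
    roots_mul ((charpoly_monic _).mul (monic_X_sub_C _)).ne_zero,
    roots_mul ((charpoly_monic _).mul (monic_X_sub_C _)).ne_zero, hneg, roots_X_sub_C,
    roots_X_sub_C, add_comm, Multiset.singleton_add, add_comm, Multiset.singleton_add,
    Multiset.cons_swap] at h
  exact Multiset.cons_inj_right _ |>.mp h

end Matrix

theorem List.sum_range_getD {M : Type*} [AddCommMonoid M] (l : List M) (m : ℕ) :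
    ∑ i ∈ Finset.range m, l.getD i 0 = (l.take m).sum := by
  induction m with
  | zero => simp
  | succ k ih =>
    rw [Finset.sum_range_succ, ih, List.take_add_one, List.sum_append, List.getD_eq_getElem?_getD]
    cases l[k]? <;> simp

theorem List.sum_take_nonneg_of_pairwise {M : Type*} [AddCommGroup M] [LinearOrder M]
    [IsOrderedAddMonoid M] {l : List M} (hl : l.Pairwise (· ≥ ·)) (hsum : 0 ≤ l.sum) (m : ℕ) :
    0 ≤ (l.take m).sum := by
  rw [← List.take_append_drop m l, List.pairwise_append] at hl
  rw [← List.sum_take_add_sum_drop l m] at hsum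
  by_cases hneg : ∃ a ∈ l.take m, a < 0
  · obtain ⟨a, ha, ha0⟩ := hneg
    have hdrop : (l.drop m).sum ≤ 0 := by
      simpa using List.sum_le_card_nsmul (l.drop m) 0 fun b hb => (hl.2.2 a ha b hb).trans ha0.le
    exact hsum.trans (add_le_of_nonpos_right hdrop)
  · push Not at hneg
    exact List.sum_nonneg hneg

theorem List.Pairwise.getLast_le {α : Type*} [Preorder α] {l : List α} (hl : l.Pairwise (· ≥ ·))
    (h : l ≠ []) {x : α} (hx : x ∈ l) : l.getLast h ≤ x := by
  rw [← List.dropLast_append_getLast h, List.pairwise_append] at hl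
  rw [← List.dropLast_append_getLast h, List.mem_append, List.mem_singleton] at hx
  rcases hx with hx | rfl
  · exact hl.2.2 x hx _ (List.mem_singleton_self _)
  · exact le_rfl

theorem eigDesc_eq_getD {n : ℕ} {A : Matrix (Fin n) (Fin n) ℝ} (hA : A.IsHermitian) (i : ℕ) :
    eigDesc A i = (A.charpoly.roots.sort (· ≥ ·)).getD i 0 := by
  set σ := Tuple.sort fun j => -hA.eigenvalues j
  have hanti : Antitone (hA.eigenvalues ∘ σ) := fun a b hab => by
    simpa using Tuple.monotone_sort (fun j => -hA.eigenvalues j) hab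
  have hsort : A.charpoly.roots.sort (· ≥ ·) = List.ofFn (hA.eigenvalues ∘ σ) := by
    rw [hA.roots_charpoly_eq_eigenvalues, ← Multiset.map_univ_val_equiv σ, Multiset.map_map,
      Fin.univ_val_map, Multiset.coe_sort]
    exact List.mergeSort_eq_self _ (List.pairwise_ofFn.mpr fun a b hab => hanti hab.le)
  by_cases hi : i < n
  · rw [eigDesc, dif_pos ⟨hi, hA⟩, hsort, List.getD_eq_getElem _ _ (by simpa using hi),
      List.getElem_ofFn]
    rfl
  · rw [eigDesc, dif_neg (fun h => hi h.1), List.getD_eq_default _ _ (by simpa [hsort] using hi)]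

theorem length_sort_roots_charpoly {n : ℕ} {A : Matrix (Fin n) (Fin n) ℝ} (hA : A.IsHermitian) :
    (A.charpoly.roots.sort (· ≥ ·)).length = n := by
  simp [hA.roots_charpoly_eq_eigenvalues]

theorem sort_roots_charpoly_vecMulVec_sub {n : ℕ} {Z : Matrix (Fin n) (Fin n) ℝ}
    (hZ : Z.IsHermitian) (hn : 0 < n) {u : Fin n → ℝ} (hu : Z *ᵥ u = eigDesc Z 0 • u)
    (hscale : -eigDesc Z (n - 1) ≤ u ⬝ᵥ u - eigDesc Z 0) :
    (vecMulVec u u - Z).charpoly.roots.sort (· ≥ ·) =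
      (u ⬝ᵥ u - eigDesc Z 0) :: (Z.charpoly.roots.sort (· ≥ ·)).tail.reverse.map Neg.neg := by
  set L := Z.charpoly.roots.sort (· ≥ ·)
  have hsorted : L.Pairwise (· ≥ ·) := Multiset.pairwise_sort _ _
  have hlen : L.length = n := length_sort_roots_charpoly hZ
  have hne : L ≠ [] := List.ne_nil_of_length_pos (hlen ▸ hn)
  have hget : ∀ i, eigDesc Z i = L.getD i 0 := eigDesc_eq_getD hZ
  have hhead : L = eigDesc Z 0 :: L.tail := by
    rw [hget, List.getD_eq_getElem _ _ (by omega), ← List.head_eq_getElem hne,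
      List.cons_head_tail]
  have hlast : eigDesc Z (n - 1) = L.getLast hne := by
    rw [hget, List.getD_eq_getElem _ _ (by omega), List.getLast_eq_getElem]
    simp only [hlen]
  have hroots : Z.charpoly.roots = eigDesc Z 0 ::ₘ ↑L.tail := by
    rw [Multiset.cons_coe, ← hhead]
    exact (Multiset.sort_eq _ _).symm
  rw [roots_charpoly_vecMulVec_sub hu u hroots, Multiset.map_coe, ← Multiset.coe_reverse,
    ← List.map_reverse, Multiset.cons_coe, Multiset.coe_sort]
  refine List.mergeSort_eq_self _ (List.pairwise_cons.2 ⟨fun b hb => ?_, ?_⟩)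
  · obtain ⟨x, hx, rfl⟩ := List.mem_map.1 hb
    have := hsorted.getLast_le hne (List.mem_of_mem_tail (List.mem_reverse.1 hx))
    linarith
  · exact List.pairwise_map.2 (List.pairwise_reverse.2 ((hsorted.sublist (List.tail_sublist L)).imp
      fun h => neg_le_neg h))

theorem sum_range_eigDesc_vecMulVec_sub {n m : ℕ} (hm : 1 ≤ m) (hmn : m ≤ n)
    {Z : Matrix (Fin n) (Fin n) ℝ} (hZ : Z.IsHermitian) {u : Fin n → ℝ}
    (hu : Z *ᵥ u = eigDesc Z 0 • u) (hscale : -eigDesc Z (n - 1) ≤ u ⬝ᵥ u - eigDesc Z 0) :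
    ∑ i ∈ Finset.range m, eigDesc (vecMulVec u u - Z) i =
      u ⬝ᵥ u - eigDesc Z 0 - ∑ i ∈ Finset.range (m - 1), eigDesc Z (n - 1 - i) := by
  have hA : (vecMulVec u u - Z).IsHermitian :=
    isHermitian_iff_isSymm.mpr <|
      IsSymm.sub (transpose_vecMulVec u u) (isHermitian_iff_isSymm.mp hZ)
  obtain ⟨k, rfl⟩ : ∃ k, m = k + 1 := ⟨m - 1, by omega⟩
  simp_rw [eigDesc_eq_getD hA, sort_roots_charpoly_vecMulVec_sub hZ (by omega) hu hscale,
    Finset.sum_range_succ', List.getD_cons_zero, List.getD_cons_succ, Nat.add_sub_cancel,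
    eigDesc_eq_getD hZ]
  set L := Z.charpoly.roots.sort (· ≥ ·)
  have hlen : L.length = n := length_sort_roots_charpoly hZ
  have hterm : ∀ i ∈ Finset.range k,
      (L.tail.reverse.map Neg.neg).getD i 0 = -L.getD (n - 1 - i) 0 := by
    intro i hi
    have hik : i < k := Finset.mem_range.1 hi
    have hi' : i < (L.tail.reverse.map Neg.neg).length := by
      simp only [List.length_map, List.length_reverse, List.length_tail, hlen]
      omega
    rw [List.getD_eq_getElem _ _ hi', List.getElem_map, List.getElem_reverse,
      List.getElem_tail, List.getD_eq_getElem _ _ (by omega)]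
    congr 2
    simp only [List.length_tail, hlen]
    omega
  rw [Finset.sum_congr rfl hterm, Finset.sum_neg_distrib]
  ring

theorem sum_range_eigDesc_nonneg {n : ℕ} {A : Matrix (Fin n) (Fin n) ℝ} (hA : A.IsHermitian)
    (htr : 0 ≤ A.trace) (m : ℕ) : 0 ≤ ∑ i ∈ Finset.range m, eigDesc A i := by
  simp_rw [eigDesc_eq_getD hA]
  rw [List.sum_range_getD]
  refine List.sum_take_nonneg_of_pairwise (Multiset.pairwise_sort _ _) ?_ m
  rwa [← Multiset.sum_coe, Multiset.sort_eq, ← trace_eq_sum_roots_charpoly_of_splits hA.splits_charpoly]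

theorem sqrtRank1_eq_vecMulVec {n : ℕ} (w : Fin n → ℝ) :
    sqrtRank1 w = vecMulVec (fun i => √(w i)) (fun i => √(w i)) :=
  rfl

theorem thetaInf_le {n : ℕ} (G : SimpleGraph (Fin n)) {w : Fin n → ℝ} (hw : ∀ i, 0 ≤ w i)
    {Y : Matrix (Fin n) (Fin n) ℝ} (hY : Y.IsSymm) (hYG : ∀ i j, ¬ G.Adj i j → Y i j = 0)
    (m : ℕ) : thetaInf G w m ≤ ∑ i ∈ Finset.range m, eigDesc (sqrtRank1 w + Y) i := by
  refine csInf_le ⟨0, ?_⟩ ⟨Y, hY, hYG, rfl⟩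
  rintro r ⟨Y', hY', hY'G, rfl⟩
  have hsymm : (sqrtRank1 w + Y').IsSymm :=
    IsSymm.add (by rw [sqrtRank1_eq_vecMulVec]; exact transpose_vecMulVec _ _) hY'
  have htr : (sqrtRank1 w + Y').trace = ∑ i, w i := by
    simp [trace, sqrtRank1, hY'G _ _ (G.loopless.irrefl _), Real.mul_self_sqrt (hw _)]
  exact sum_range_eigDesc_nonneg (isHermitian_iff_isSymm.mpr hsymm)
    (htr ▸ Finset.sum_nonneg fun i _ => hw i) m

theorem stmt13_general {n : ℕ} (G : SimpleGraph (Fin n)) (m : ℕ)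
    (hm1 : 1 ≤ m) (hmn : m ≤ n)
    (Z : Matrix (Fin n) (Fin n) ℝ) (hZsymm : Z.IsSymm)
    (hZsupp : ∀ i j, ¬ G.Adj i j → Z i j = 0)
    (v : Fin n → ℝ)
    (hveig : Z.mulVec v = eigDesc Z 0 • v)
    (hsum : 0 < eigDesc Z 0 + ∑ i ∈ Finset.range (m - 1), eigDesc Z (n - 1 - i))
    (w : Fin n → ℝ) (hw : ∀ i, 0 ≤ w i)
    (hwv : ∃ c : ℝ, (fun i => Real.sqrt (w i)) = c • v)
    (hscale : -(eigDesc Z (n - 1)) ≤ (∑ i, w i) - eigDesc Z 0) :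
    thetaInf G w m ≤ ∑ i ∈ Finset.range m, eigDesc (sqrtRank1 w - Z) i ∧
    (∑ i ∈ Finset.range m, eigDesc (sqrtRank1 w - Z) i) =
      (∑ i, w i) - eigDesc Z 0 - ∑ i ∈ Finset.range (m - 1), eigDesc Z (n - 1 - i) ∧
    (∑ i ∈ Finset.range m, eigDesc (sqrtRank1 w - Z) i) < ∑ i, w i := by
  obtain ⟨c, hc⟩ := hwv
  have hu : Z *ᵥ (fun i => √(w i)) = eigDesc Z 0 • fun i => √(w i) := by
    rw [hc, mulVec_smul, hveig, smul_comm]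
  have huu : (fun i => √(w i)) ⬝ᵥ (fun i => √(w i)) = ∑ i, w i := by
    simp [dotProduct, Real.mul_self_sqrt (hw _)]
  have hsum_eq : ∑ i ∈ Finset.range m, eigDesc (sqrtRank1 w - Z) i =
      (∑ i, w i) - eigDesc Z 0 - ∑ i ∈ Finset.range (m - 1), eigDesc Z (n - 1 - i) := by
    rw [sqrtRank1_eq_vecMulVec, ← huu]
    exact sum_range_eigDesc_vecMulVec_sub hm1 hmn (isHermitian_iff_isSymm.mpr hZsymm) hu
      (huu ▸ hscale)
  refine ⟨?_, hsum_eq, by linarith⟩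
  rw [sub_eq_add_neg]
  exact thetaInf_le G hw (IsSymm.neg hZsymm) (fun i j h => by simp [hZsupp i j h]) m

/-- The second half of the proof of Theorem 2 (Theorem `maxtheta`): if `m = h(G) − 1 ≥ 1`
and `Z` is a symmetric matrix supported on the edges of `G` with a nonnegative top
eigenvector `v` and `λ₁(Z) + Σ_{i=1}^{m−1} λ_{n+1−i}(Z) > 0`, and `√w` is a scalar
multiple of `v` scaled so that `wᵀ𝟙 − λ₁(Z) ≥ −λₙ(Z)`, then
`ϑ_m(G;w) ≤ Σ_{i=1}^m λᵢ(√w√wᵀ − Z) = wᵀ𝟙 − λ₁(Z) − Σ_{i=1}^{m−1} λ_{n+1−i}(Z) < wᵀ𝟙`. -/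
theorem stmt13 {n : ℕ} (G : SimpleGraph (Fin n)) (m : ℕ)
    (hm : m = hParam G - 1) (hm1 : 1 ≤ m) (hmn : m ≤ n)
    (Z : Matrix (Fin n) (Fin n) ℝ) (hZsymm : Z.IsSymm)
    (hZsupp : ∀ i j, ¬ G.Adj i j → Z i j = 0)
    (v : Fin n → ℝ) (hvne : v ≠ 0) (hvnn : ∀ i, 0 ≤ v i)
    (hveig : Z.mulVec v = eigDesc Z 0 • v)
    (hsum : 0 < eigDesc Z 0 + ∑ i ∈ Finset.range (m - 1), eigDesc Z (n - 1 - i))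
    (w : Fin n → ℝ) (hw : ∀ i, 0 ≤ w i)
    (hwv : ∃ c : ℝ, (fun i => Real.sqrt (w i)) = c • v)
    (hscale : -(eigDesc Z (n - 1)) ≤ (∑ i, w i) - eigDesc Z 0) :
    thetaInf G w m ≤ ∑ i ∈ Finset.range m, eigDesc (sqrtRank1 w - Z) i ∧
    (∑ i ∈ Finset.range m, eigDesc (sqrtRank1 w - Z) i) =
      (∑ i, w i) - eigDesc Z 0 - ∑ i ∈ Finset.range (m - 1), eigDesc Z (n - 1 - i) ∧
    (∑ i ∈ Finset.range m, eigDesc (sqrtRank1 w - Z) i) < ∑ i, w i :=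
  stmt13_general G m hm1 hmn Z hZsymm hZsupp v hveig hsum w hw hwv hscale
end
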